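/- arXiv:math/0307064 — 6 statements merged into one kernel-verified Lean document; each statement's English description precedes it below -/
import Mathlib

section
/- The exponential generating function of the hierarchical-ordering numbers satisfies H(x) = exp(B(x) − 1), where B(x) is the exponential generating function of the ordered Bell numbers. Precisely, as formal power series over ℚ: ∑_{n≥0} (H_n/n!) x^n = exp( ∑_{n≥1} (B_n/n!) x^n ), noting that B(x) − 1 = ∑_{n≥1} (B_n/n!) x^n since B_0 = 1. -/
open Finset PowerSeries Filter Nat

/-- `L` is an ordered set partition of the finite set `S`: a finite sequence of pairwise
disjoint nonempty subsets of `S` whose union is `S`. -/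
def IsOrderedSetPartition {α : Type*} [DecidableEq α] (S : Finset α) (L : List (Finset α)) :
    Prop :=
  (∀ T ∈ L, T ≠ ∅) ∧ L.Pairwise Disjoint ∧ L.foldr (· ∪ ·) ∅ = S

/-- The type of ordered set partitions of the finite set `S`. -/
def OrderedSetPartition {α : Type*} [DecidableEq α] (S : Finset α) :=
  {L : List (Finset α) // IsOrderedSetPartition S L}

/-- The ordered Bell number `B n`: the number of ordered set partitions of an `n`-element set. -/
noncomputable def orderedBell (n : ℕ) : ℕ :=
  Nat.card (OrderedSetPartition (Finset.univ : Finset (Fin n)))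

/-- A hierarchical ordering (society) on the finite set `S`: an (unordered) set partition of `S`
into nonempty blocks, together with an ordered set partition of each block. -/
def HierarchicalOrdering {α : Type*} [DecidableEq α] (S : Finset α) :=
  (P : Finpartition S) × ((b : P.parts) → OrderedSetPartition (b : Finset α))

/-- `H n`: the number of hierarchical orderings on an `n`-element set. -/
noncomputable def hier (n : ℕ) : ℕ :=
  Nat.card (HierarchicalOrdering (Finset.univ : Finset (Fin n)))

/-- The formal exponential `exp S` of a power series (intended for `S` with zero constant
term): its `n`-th coefficient is `∑_{k=0}^{n} [xⁿ] Sᵏ / k!`. -/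
noncomputable def expComp (S : PowerSeries ℚ) : PowerSeries ℚ :=
  PowerSeries.mk fun n => ∑ k ∈ Finset.range (n + 1), PowerSeries.coeff n (S ^ k) / (k ! : ℚ)

/-! Since a hierarchical ordering is a set partition with an ordered set partition on each block,
`H n = ∑_P ∏_{t ∈ P} B |t|` over the set partitions `P` of an `n`-set. Splitting off the block of
a fixed point shows that such a sum `a` (for any weight `f` in place of `B`) obeys
`a (m + 1) = ∑ⱼ C(m, j) f (j + 1) a (m - j)`, which determines it. On exponential generating
functions this recurrence reads `A' = F' A`, and `exp ∘ F` satisfies it by the chain rule. -/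

namespace PowerSeries

theorem coeff_pow_eq_zero_of_lt {R : Type*} [CommSemiring R] {S : R⟦X⟧} (hS : constantCoeff S = 0)
    {n k : ℕ} (h : n < k) : coeff n (S ^ k) = 0 :=
  coeff_of_lt_order _ <| (Nat.cast_lt.2 h).trans_le (le_order_pow_of_constantCoeff_eq_zero k hS)

theorem factorial_mul_coeff_succ_of_derivative_eq {K : Type*} [Field K] [CharZero K]
    {E G : K⟦X⟧} (h : d⁄dX K E = d⁄dX K G * E) (m : ℕ) :
    ((m + 1)! : K) * coeff (m + 1) E = ∑ j ∈ range (m + 1), (m.choose j : K) *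
      (((j + 1)! : K) * coeff (j + 1) G) * (((m - j)! : K) * coeff (m - j) E) := by
  have hm := congrArg (coeff m) h
  rw [coeff_derivative, coeff_mul, Nat.sum_antidiagonal_eq_sum_range_succ_mk] at hm
  calc ((m + 1)! : K) * coeff (m + 1) E = m ! * (coeff (m + 1) E * (m + 1)) := by
        push_cast [Nat.factorial_succ]; ring
    _ = _ := by
        rw [hm, mul_sum]
        refine sum_congr rfl fun j hj => ?_
        have hjm : j ≤ m := Nat.lt_succ_iff.1 (Finset.mem_range.1 hj)
        have : ((m - j)! : K) ≠ 0 := Nat.cast_ne_zero.2 (Nat.factorial_ne_zero _)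
        have : (j ! : K) ≠ 0 := Nat.cast_ne_zero.2 (Nat.factorial_ne_zero _)
        rw [coeff_derivative, Nat.cast_choose K hjm, Nat.factorial_succ]
        push_cast
        field_simp

end PowerSeries

theorem expComp_eq_subst_exp {S : ℚ⟦X⟧} (hS : constantCoeff S = 0) :
    expComp S = (exp ℚ).subst S := by
  ext n
  rw [expComp, coeff_mk, coeff_subst' (HasSubst.of_constantCoeff_zero' hS),
    finsum_eq_sum_of_support_subset (s := range (n + 1))]
  · simp [coeff_exp, div_eq_inv_mul]
  · intro k hk
    rw [coe_range, Set.mem_Iio]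
    by_contra! hnk
    exact hk (smul_eq_zero_of_right _ (coeff_pow_eq_zero_of_lt hS (by omega)))

theorem derivative_expComp {S : ℚ⟦X⟧} (hS : constantCoeff S = 0) :
    d⁄dX ℚ (expComp S) = d⁄dX ℚ S * expComp S := by
  rw [expComp_eq_subst_exp hS, derivative_subst (HasSubst.of_constantCoeff_zero' hS),
    derivative_exp, mul_comm]

namespace Finpartition

variable {α : Type*} [GeneralizedBooleanAlgebra α] [DecidableEq α] {a b : α}

theorem avoid_parts_of_mem (P : Finpartition a) (hb : b ∈ P.parts) :
    (P.avoid b).parts = P.parts.erase b := by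
  ext c
  rw [mem_avoid, Finset.mem_erase]
  constructor
  · rintro ⟨d, hd, hdb, rfl⟩
    have hne : d ≠ b := by rintro rfl; exact hdb le_rfl
    have hdisj : Disjoint d b := P.disjoint hd hb hne
    rw [hdisj.sdiff_eq_left]
    exact ⟨hne, hd⟩
  · rintro ⟨hcb, hc⟩
    have hdisj : Disjoint c b := P.disjoint hc hb hcb
    exact ⟨c, hc, fun hle => P.ne_bot hc (hdisj.eq_bot_of_le hle), hdisj.sdiff_eq_left⟩

end Finpartition

theorem Finset.sum_powerset_filter_mem_apply_card {β M : Type*} [DecidableEq β] [AddCommMonoid M]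
    {S : Finset β} {x : β} (hx : x ∈ S) (g : ℕ → M) :
    ∑ B ∈ S.powerset with x ∈ B, g B.card =
      ∑ j ∈ range S.card, (S.card - 1).choose j • g (j + 1) := by
  obtain ⟨T, hxT, rfl⟩ : ∃ T, x ∉ T ∧ insert x T = S :=
    ⟨S.erase x, notMem_erase x S, insert_erase hx⟩
  have hnot {U : Finset β} (hU : U ∈ T.powerset) : x ∉ U :=
    notMem_of_mem_powerset_of_notMem hU hxT
  have himage : (insert x T).powerset.filter (x ∈ ·) = T.powerset.image (insert x) := by
    ext B
    simp only [mem_filter, mem_powerset, mem_image]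
    constructor
    · rintro ⟨hB, hxB⟩
      exact ⟨B.erase x, subset_insert_iff.1 hB, insert_erase hxB⟩
    · rintro ⟨U, hU, rfl⟩
      exact ⟨insert_subset_insert x hU, mem_insert_self x U⟩
  rw [himage, sum_image fun U hU V hV h => by
      rw [← erase_insert (hnot hU), h, erase_insert (hnot hV)],
    card_insert_of_notMem hxT, Nat.add_sub_cancel, ← sum_powerset_apply_card]
  exact sum_congr rfl fun U hU => by rw [card_insert_of_notMem (hnot hU)]

section PartitionSum

variable {α R : Type*} [DecidableEq α] [CommSemiring R]

def partitionSum (f : ℕ → R) (S : Finset α) : R :=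
  ∑ P : Finpartition S, ∏ t ∈ P.parts, f t.card

theorem partitionSum_empty (f : ℕ → R) : partitionSum f (∅ : Finset α) = 1 := by
  show ∑ P : Finpartition (⊥ : Finset α), _ = 1
  rw [Fintype.sum_unique]
  rfl

theorem partitionSum_eq_sum_block (f : ℕ → R) {S : Finset α} {x : α} (hx : x ∈ S) :
    partitionSum f S = ∑ B ∈ S.powerset with x ∈ B, f B.card * partitionSum f (S \ B) := by
  rw [partitionSum, ← sum_fiberwise_of_maps_to (g := fun P : Finpartition S => P.part x)
    (t := S.powerset.filter (x ∈ ·))]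
  · refine sum_congr rfl fun B hB => ?_
    obtain ⟨hBS, hxB⟩ : B ⊆ S ∧ x ∈ B := by simpa using hB
    have hBQ (Q : Finpartition (S \ B)) : B ∉ Q.parts := fun h =>
      (Finset.mem_sdiff.1 (Q.le h hxB)).2 hxB
    rw [partitionSum, mul_sum]
    refine sum_nbij' (fun P => P.avoid B)
      (fun Q => Q.extend (ne_empty_of_mem hxB) sdiff_disjoint (sdiff_union_of_subset hBS))
      (fun _ _ => mem_univ _) (fun Q _ => ?_) (fun P hP => ?_) (fun Q _ => ?_) (fun P hP => ?_)
    · simpa using (Q.extend _ _ _).part_eq_of_mem (Finset.mem_insert_self B _) hxB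
    · obtain rfl : P.part x = B := by simpa using hP
      ext1
      rw [Finpartition.extend_parts, Finpartition.avoid_parts_of_mem _ (P.part_mem.2 hx),
        insert_erase (P.part_mem.2 hx)]
    · ext1
      rw [Finpartition.avoid_parts_of_mem _ (by simp), Finpartition.extend_parts,
        erase_insert (hBQ Q)]
    · obtain rfl : P.part x = B := by simpa using hP
      rw [Finpartition.avoid_parts_of_mem _ (P.part_mem.2 hx)]
      exact (mul_prod_erase _ _ (P.part_mem.2 hx)).symm
  · intro P _
    rw [mem_filter, mem_powerset]
    exact ⟨P.le (P.part_mem.2 hx), P.mem_part_self.2 hx⟩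

theorem partitionSum_eq_of_recurrence (f a : ℕ → R) (h0 : a 0 = 1)
    (hsucc : ∀ m, a (m + 1) = ∑ j ∈ range (m + 1), m.choose j * f (j + 1) * a (m - j))
    (S : Finset α) : partitionSum f S = a S.card := by
  induction S using Finset.strongInduction with
  | H S ih =>
  obtain rfl | ⟨x, hx⟩ := S.eq_empty_or_nonempty
  · rw [partitionSum_empty, card_empty, h0]
  obtain ⟨m, hm⟩ : ∃ m, S.card = m + 1 := Nat.exists_eq_add_one.2 (card_pos.2 ⟨x, hx⟩)
  calc partitionSum f S = ∑ B ∈ S.powerset with x ∈ B, f B.card * a (S.card - B.card) := by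
        rw [partitionSum_eq_sum_block f hx]
        refine sum_congr rfl fun B hB => ?_
        obtain ⟨hBS, hxB⟩ : B ⊆ S ∧ x ∈ B := by simpa using hB
        rw [ih _ (sdiff_ssubset hBS ⟨x, hxB⟩), card_sdiff_of_subset hBS]
    _ = a S.card := by
        rw [sum_powerset_filter_mem_apply_card hx (fun k => f k * a (S.card - k)), hm, hsucc]
        simp [nsmul_eq_mul, mul_assoc]

end PartitionSum

section OrderedSetPartition

variable {α β : Type*} [DecidableEq α] [DecidableEq β]

theorem subset_foldr_union_of_mem {L : List (Finset α)} {T : Finset α} (hT : T ∈ L) :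
    T ⊆ L.foldr (· ∪ ·) ∅ := by
  induction L with
  | nil => cases hT
  | cons U L ih =>
    rcases List.mem_cons.1 hT with rfl | hT
    · exact subset_union_left
    · exact (ih hT).trans subset_union_right

theorem foldr_union_map (g : α ↪ β) (L : List (Finset α)) :
    (L.map (Finset.map g)).foldr (· ∪ ·) ∅ = (L.foldr (· ∪ ·) ∅).map g := by
  induction L with
  | nil => rfl
  | cons T L ih => simp [ih, map_union]

theorem IsOrderedSetPartition.subset {S : Finset α} {L : List (Finset α)}
    (h : IsOrderedSetPartition S L) {T : Finset α} (hT : T ∈ L) : T ⊆ S :=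
  h.2.2 ▸ subset_foldr_union_of_mem hT

theorem IsOrderedSetPartition.nodup {S : Finset α} {L : List (Finset α)}
    (h : IsOrderedSetPartition S L) : L.Nodup :=
  h.2.1.imp_of_mem fun {T _} hT _ hTU => by
    rintro rfl
    exact h.1 T hT (disjoint_self.1 hTU)

theorem isOrderedSetPartition_map_iff (g : α ↪ β) {S : Finset α} {L : List (Finset α)} :
    IsOrderedSetPartition (S.map g) (L.map (Finset.map g)) ↔ IsOrderedSetPartition S L := by
  simp [IsOrderedSetPartition, List.pairwise_map, foldr_union_map]

noncomputable def OrderedSetPartition.mapEquiv (g : α ↪ β) (S : Finset α) :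
    OrderedSetPartition S ≃ OrderedSetPartition (S.map g) :=
  Equiv.ofBijective
    (fun L => ⟨L.1.map (Finset.map g), (isOrderedSetPartition_map_iff g).2 L.2⟩)
    ⟨fun L L' h => Subtype.ext <|
        List.map_injective_iff.2 (Finset.map_injective g) (congrArg Subtype.val h),
      fun ⟨L', hL'⟩ => by
        obtain ⟨L, rfl⟩ : L' ∈ Set.range (List.map (Finset.map g)) := by
          rw [Set.range_list_map]
          intro T hT
          obtain ⟨U, -, rfl⟩ := subset_map_iff.1 (hL'.subset hT)
          exact ⟨U, rfl⟩
        exact ⟨⟨L, (isOrderedSetPartition_map_iff g).1 hL'⟩, rfl⟩⟩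

theorem card_orderedSetPartition (S : Finset α) :
    Nat.card (OrderedSetPartition S) = orderedBell S.card := by
  let e : Fin S.card ↪ α := S.equivFin.symm.toEmbedding.trans (Function.Embedding.subtype _)
  have he : (univ : Finset (Fin S.card)).map e = S := by
    ext a
    simp only [Finset.mem_map, mem_univ, true_and]
    refine ⟨fun ⟨i, hi⟩ => hi ▸ (S.equivFin.symm i).2, fun ha => ⟨S.equivFin ⟨a, ha⟩, ?_⟩⟩
    simp [e]
  have := Nat.card_congr (OrderedSetPartition.mapEquiv e univ)
  rw [he] at this
  rw [orderedBell, this]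

instance [Fintype α] (S : Finset α) : Finite (OrderedSetPartition S) :=
  Finite.of_injective (fun L : OrderedSetPartition S => (⟨L.1, L.2.nodup⟩ : {l // List.Nodup l}))
    fun _ _ h => Subtype.ext <| by simpa using h

theorem card_hierarchicalOrdering [Fintype α] (S : Finset α) :
    Nat.card (HierarchicalOrdering S) = partitionSum orderedBell S := by
  rw [HierarchicalOrdering, Nat.card_sigma, partitionSum]
  refine sum_congr rfl fun P _ => ?_
  rw [Nat.card_pi, ← prod_coe_sort P.parts]
  simp [card_orderedSetPartition]

end OrderedSetPartition

/-- **Theorem 1 (labeled case).** The exponential generating function of the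
hierarchical-ordering numbers satisfies `H(x) = exp(B(x) − 1)`, i.e.
`∑_{n≥0} (H_n/n!) xⁿ = exp( ∑_{n≥1} (B_n/n!) xⁿ )` as formal power series over `ℚ`. -/
theorem egf_hier_eq_exp_orderedBell :
    (PowerSeries.mk fun n => (hier n : ℚ) / (n ! : ℚ)) =
      expComp (PowerSeries.mk fun n => if n = 0 then 0 else (orderedBell n : ℚ) / (n ! : ℚ)) := by
  set S : ℚ⟦X⟧ := PowerSeries.mk fun n => if n = 0 then 0 else (orderedBell n : ℚ) / (n ! : ℚ)
  have hS : constantCoeff S = 0 := by simp [S, ← coeff_zero_eq_constantCoeff_apply]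
  have hcoeffS (j : ℕ) : ((j + 1)! : ℚ) * coeff (j + 1) S = orderedBell (j + 1) := by
    have : ((j + 1)! : ℚ) ≠ 0 := Nat.cast_ne_zero.2 (Nat.factorial_ne_zero _)
    simp only [S, coeff_mk, Nat.add_eq_zero_iff, one_ne_zero, and_false, ↓reduceIte]
    field_simp
  ext n
  have hpartition := partitionSum_eq_of_recurrence (fun k => (orderedBell k : ℚ))
    (fun k => k ! * coeff k (expComp S)) (by simp [expComp]) (fun m => by
      simp only [factorial_mul_coeff_succ_of_derivative_eq (derivative_expComp hS), hcoeffS])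
    (univ : Finset (Fin n))
  have hcast : (hier n : ℚ) =
      partitionSum (fun k => (orderedBell k : ℚ)) (univ : Finset (Fin n)) := by
    rw [hier, card_hierarchicalOrdering, partitionSum, partitionSum]
    push_cast
    rfl
  have : (n ! : ℚ) ≠ 0 := Nat.cast_ne_zero.2 (Nat.factorial_ne_zero _)
  rw [coeff_mk, hcast, hpartition, Finset.card_fin]
  field_simp
end

section
/- For every n ≥ 1, H_n = ∑_{(m_1,…,m_n)} n! · (∏_{j=1}^{n} B_j^{m_j}) / (∏_{j=1}^{n} m_j! · (j!)^{m_j}), where the sum is over all n-tuples (m_1,…,m_n) of nonnegative integers with ∑_{j=1}^{n} j·m_j = n (here m_j is the number of blocks of size j in the underlying set partition). -/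
open Finset PowerSeries Filter Nat

/-! Sorting hierarchical orderings by their underlying partition gives
`H_n = ∑_P ∏_{b ∈ P} B_{|b|}`, and the summand only depends on the type `m` of `P`. To count the
partitions of type `m`, lay out `n` slots in blocks, `m_j` blocks of size `j`. Each of the `n!`
bijections from the slots onto the set cuts it into a partition of type `m`, and each partition
`P` of type `m` arises exactly `∏ m_j! (j!)^{m_j}` times: once for every size-preserving matching of
the blocks with the parts of `P` and every choice of bijections between matched blocks and parts. -/

namespace OrderedSetPartition

section

variable {α β : Type*}

theorem exists_map_eq_of_subset_map (g : β ↪ α) {T : Finset β} {L : List (Finset α)}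
    (hL : ∀ t ∈ L, t ⊆ T.map g) : ∃ L' : List (Finset β), L'.map (Finset.map g) = L := by
  induction L with
  | nil => exact ⟨[], rfl⟩
  | cons t L ih =>
    obtain ⟨u, -, rfl⟩ := Finset.subset_map_iff.1 (hL t List.mem_cons_self)
    obtain ⟨L', rfl⟩ := ih fun t ht => hL t (List.mem_cons_of_mem _ ht)
    exact ⟨u :: L', rfl⟩

variable [DecidableEq α]

theorem subset_foldr_union {L : List (Finset α)} {t : Finset α} (ht : t ∈ L) :
    t ⊆ L.foldr (· ∪ ·) ∅ := by
  induction L with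
  | nil => simp at ht
  | cons u L ih =>
    rcases List.mem_cons.1 ht with rfl | ht
    · exact Finset.subset_union_left
    · exact (ih ht).trans Finset.subset_union_right

theorem subset_of_mem {S : Finset α} {L : List (Finset α)} (hL : IsOrderedSetPartition S L)
    {t : Finset α} (ht : t ∈ L) : t ⊆ S :=
  hL.2.2 ▸ subset_foldr_union ht

theorem nodup {S : Finset α} {L : List (Finset α)} (hL : IsOrderedSetPartition S L) : L.Nodup :=
  hL.2.1.imp_of_mem fun {t u} ht _ (hdisj : Disjoint t u) (hEq : t = u) =>
    hL.1 t ht (disjoint_self.1 (hEq ▸ hdisj))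

instance [Fintype α] (S : Finset α) : Finite (OrderedSetPartition S) :=
  Finite.of_injective
    (fun L : OrderedSetPartition S => (⟨L.1, nodup L.2⟩ : {l : List (Finset α) // l.Nodup}))
    fun _ _ h => Subtype.ext (congrArg Subtype.val h :)

variable [DecidableEq β]

theorem foldr_union_map (g : β ↪ α) (L : List (Finset β)) :
    (L.map (Finset.map g)).foldr (· ∪ ·) ∅ = (L.foldr (· ∪ ·) ∅).map g := by
  induction L with
  | nil => rfl
  | cons t L ih => simp [ih, Finset.map_union]

theorem isOrderedSetPartition_map_iff (g : β ↪ α) {T : Finset β} {L : List (Finset β)} :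
    IsOrderedSetPartition (T.map g) (L.map (Finset.map g)) ↔ IsOrderedSetPartition T L := by
  simp [IsOrderedSetPartition, List.pairwise_map, foldr_union_map, Finset.map_inj]

noncomputable def mapEquiv_s2 (g : β ↪ α) (T : Finset β) :
    OrderedSetPartition T ≃ OrderedSetPartition (T.map g) :=
  Equiv.ofBijective (fun L => ⟨L.1.map (Finset.map g), (isOrderedSetPartition_map_iff g).2 L.2⟩)
    ⟨fun L L' h => Subtype.ext <| List.map_injective_iff.2 (Finset.map_injective g)
      (congrArg Subtype.val h :), fun L => by
      obtain ⟨L', hL'⟩ := exists_map_eq_of_subset_map g fun t ht => subset_of_mem L.2 ht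
      exact ⟨⟨L', (isOrderedSetPartition_map_iff g).1 (hL' ▸ L.2)⟩, Subtype.ext hL'⟩⟩

end

theorem natCard_eq_orderedBell {α : Type*} [DecidableEq α] (S : Finset α) :
    Nat.card (OrderedSetPartition S) = orderedBell S.card := by
  let g : Fin S.card ↪ α := S.equivFin.symm.toEmbedding.trans (Function.Embedding.subtype _)
  have hg : (Finset.univ : Finset (Fin S.card)).map g = S := by
    rw [← Finset.map_map, Finset.map_univ_equiv, Finset.univ_eq_attach, Finset.attach_map_val]
  rw [orderedBell, Nat.card_congr (mapEquiv_s2 g Finset.univ), hg]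

end OrderedSetPartition

theorem natCard_hierarchicalOrdering {α : Type*} [Fintype α] [DecidableEq α] (S : Finset α) :
    Nat.card (HierarchicalOrdering S) =
      ∑ P : Finpartition S, ∏ b ∈ P.parts, orderedBell b.card := by
  rw [HierarchicalOrdering, Nat.card_sigma]
  refine Finset.sum_congr rfl fun P _ => ?_
  rw [Nat.card_pi, ← Finset.prod_coe_sort P.parts]
  simp [OrderedSetPartition.natCard_eq_orderedBell]

namespace Finpartition

section Fibers

variable {α ι : Type*} [Fintype α] [DecidableEq α] [DecidableEq ι]

def fibers (f : α → ι) : Finpartition (Finset.univ : Finset α) :=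
  letI : DecidableRel (Setoid.ker f).r := fun a b => decEq (f a) (f b)
  ofSetoid (Setoid.ker f)

theorem part_eq_part_iff (P : Finpartition (Finset.univ : Finset α)) (a b : α) :
    P.part a = P.part b ↔ b ∈ P.part a := by
  rw [P.mem_part_iff_part_eq_part (Finset.mem_univ b) (Finset.mem_univ a), eq_comm]

theorem ext_part {P Q : Finpartition (Finset.univ : Finset α)} (h : ∀ a, P.part a = Q.part a) :
    P = Q := by
  have parts_eq (R : Finpartition (Finset.univ : Finset α)) :
      R.parts = Finset.univ.image R.part := by
    ext b
    refine ⟨fun hb => ?_, fun hb => ?_⟩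
    · obtain ⟨a, -, rfl⟩ := R.part_surjOn hb
      exact Finset.mem_image_of_mem _ (Finset.mem_univ a)
    · obtain ⟨a, -, rfl⟩ := Finset.mem_image.1 hb
      exact R.part_mem.2 (Finset.mem_univ a)
  exact Finpartition.ext <| by rw [parts_eq P, parts_eq Q, funext h]

theorem fibers_eq_iff (f : α → ι) (P : Finpartition (Finset.univ : Finset α)) :
    fibers f = P ↔ ∀ a b, P.part a = P.part b ↔ f a = f b := by
  have key : ∀ a b, (fibers f).part a = (fibers f).part b ↔ f a = f b := fun a b => by
    rw [part_eq_part_iff]; exact mem_part_ofSetoid_iff_rel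
  refine ⟨fun h => h ▸ key, fun h => (ext_part fun a => ?_).symm⟩
  ext b
  rw [← part_eq_part_iff, ← part_eq_part_iff, h, key]

def partOf (P : Finpartition (Finset.univ : Finset α)) (a : α) : P.parts :=
  ⟨P.part a, P.part_mem.2 (Finset.mem_univ a)⟩

theorem card_partOf_eq (P : Finpartition (Finset.univ : Finset α)) (b : P.parts) :
    Fintype.card {a // P.partOf a = b} = #(b : Finset α) := by
  rw [← Fintype.card_coe]
  exact Fintype.card_congr <| Equiv.subtypeEquivRight fun a => by
    rw [partOf, Subtype.ext_iff, P.part_eq_iff_mem b.2]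

end Fibers

section Card

variable {α : Type*} [DecidableEq α] {s : Finset α}

/-- `P.partType n j` is the number of parts of size `j + 1`, the paper's `m_{j+1}`. -/
def partType (P : Finpartition s) (n : ℕ) (j : Fin n) : ℕ :=
  #{b ∈ P.parts | b.card = (j : ℕ) + 1}

@[to_additive]
theorem prod_parts_card_eq_prod_fin {M : Type*} [CommMonoid M] (P : Finpartition s) {n : ℕ}
    (hs : #s ≤ n) (f : ℕ → M) :
    ∏ b ∈ P.parts, f #b = ∏ j : Fin n, f (j + 1) ^ P.partType n j := by
  have card_pos {b} (hb : b ∈ P.parts) : 0 < #b := Finset.card_pos.2 (P.nonempty_of_mem_parts hb)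
  have maps_to (b) (hb : b ∈ P.parts) : #b - 1 ∈ Finset.range n := by
    have := (Finset.card_le_card (P.le hb)).trans hs
    have := card_pos hb
    rw [Finset.mem_range]; omega
  simp only [partType]
  rw [Fin.prod_univ_eq_prod_range (fun k => f (k + 1) ^ #{b ∈ P.parts | #b = k + 1}),
    ← Finset.prod_fiberwise_of_maps_to maps_to]
  refine Finset.prod_congr rfl fun k _ => ?_
  have hfilter : {b ∈ P.parts | #b - 1 = k} = {b ∈ P.parts | #b = k + 1} :=
    Finset.filter_congr fun b hb => by have := card_pos hb; omega
  rw [hfilter, ← Finset.prod_const]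
  exact Finset.prod_congr rfl fun b hb => by rw [(Finset.mem_filter.1 hb).2]

theorem sum_succ_mul_partType (P : Finpartition s) {n : ℕ} (hs : #s = n) :
    ∑ j : Fin n, ((j : ℕ) + 1) * P.partType n j = n := by
  have := P.sum_parts_card_eq_sum_fin hs.le id
  simp only [id, smul_eq_mul, P.sum_card_parts, hs] at this
  simp_rw [this, Nat.mul_comm]

theorem partType_le (P : Finpartition s) (n : ℕ) (j : Fin n) : P.partType n j ≤ #s :=
  (Finset.card_filter_le _ _).trans P.card_parts_le_card

end Card

end Finpartition

section FiberwiseEquiv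

variable {X Y I : Type*} [Fintype X] [Fintype Y] [DecidableEq I] {f : X → I} {g : Y → I}

theorem Fintype.card_fiber_eq_of_equiv (e : X ≃ Y) (he : ∀ x, g (e x) = f x) (i : I) :
    Fintype.card {x // f x = i} = Fintype.card {y // g y = i} :=
  Fintype.card_congr (e.subtypeEquiv fun x => by rw [he])

variable [DecidableEq X] [DecidableEq Y]

/-- Once the fibres of `f` and `g` have matching sizes, the fibre-preserving bijections `X ≃ Y`
form a torsor under the stabilizer of `f`. -/
theorem Fintype.card_equiv_fiberwise
    (h : ∀ i, Fintype.card {x // f x = i} = Fintype.card {y // g y = i}) :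
    Fintype.card {e : X ≃ Y // ∀ x, g (e x) = f x} =
      Fintype.card {σ : Equiv.Perm X // f ∘ σ = f} := by
  let e₀ : X ≃ Y := Equiv.ofFiberEquiv fun i => Fintype.equivOfCardEq (h i)
  have he₀ (y : Y) : f (e₀.symm y) = g y := by
    have := Equiv.ofFiberEquiv_map (fun i => Fintype.equivOfCardEq (h i)) (e₀.symm y)
    rwa [show Equiv.ofFiberEquiv _ (e₀.symm y) = y from e₀.apply_symm_apply y, eq_comm] at this
  refine Fintype.card_congr (((Equiv.refl X).equivCongr e₀).symm.subtypeEquiv fun e => ?_)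
  simp only [funext_iff, Function.comp_apply]
  exact forall_congr' fun x => by simp [he₀]
    
end FiberwiseEquiv

abbrev Finpartition.Labelling {α ι : Type*} [Fintype α] [DecidableEq α]
    (P : Finpartition (Finset.univ : Finset α)) (s : ι → ℕ) :=
  {μ : ι ≃ P.parts // ∀ i, #(μ i : Finset α) = s i}

section Labelling

open Finpartition

variable {α ι : Type*} [Fintype α] [DecidableEq α] [Fintype ι] [DecidableEq ι] (s : ι → ℕ)

theorem card_fiber_fst (i : ι) : Fintype.card {x : Σ i, Fin (s i) // x.1 = i} = s i := by
  rw [Fintype.card_congr (Equiv.sigmaSubtype i), Fintype.card_fin]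

theorem card_fiber_comp_fst {β : Type*} [DecidableEq β] (μ : ι ≃ β) (b : β) :
    Fintype.card {x : Σ i, Fin (s i) // μ x.1 = b} = s (μ.symm b) := by
  rw [← card_fiber_fst s (μ.symm b)]
  exact Fintype.card_congr (Equiv.subtypeEquivRight fun x => μ.eq_symm_apply.symm)

theorem card_equiv_partOf_eq (P : Finpartition (Finset.univ : Finset α)) (μ : ι ≃ P.parts)
    (hμ : ∀ i, #(μ i : Finset α) = s i) :
    Fintype.card {e : (Σ i, Fin (s i)) ≃ α // ∀ x, P.partOf (e x) = μ x.1} = ∏ i, (s i)! := by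
  have hfib (b : P.parts) : Fintype.card {x : Σ i, Fin (s i) // μ x.1 = b} =
      Fintype.card {a // P.partOf a = b} := by
    rw [card_fiber_comp_fst, card_partOf_eq, ← hμ, μ.apply_symm_apply]
  have hstab : ∀ σ : Equiv.Perm (Σ i, Fin (s i)),
      (fun x => μ x.1) ∘ σ = (fun x => μ x.1) ↔ Sigma.fst ∘ σ = Sigma.fst := fun σ =>
    μ.injective.comp_left.eq_iff (a := Sigma.fst ∘ σ) (b := Sigma.fst)
  rw [Fintype.card_equiv_fiberwise hfib, Fintype.card_congr (Equiv.subtypeEquivRight hstab),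
    DomMulAct.stabilizer_card]
  simp_rw [card_fiber_fst]

variable {s}

/-- The labelling attached to a bijection from the slots is read off from the first slot of
each block. -/
noncomputable def slotEquivSigmaLabelling (hs : ∀ i, 0 < s i)
    (P : Finpartition (Finset.univ : Finset α)) :
    {e : (Σ i, Fin (s i)) ≃ α // fibers (fun a => (e.symm a).1) = P} ≃
      Σ μ : P.Labelling s,
        {e : (Σ i, Fin (s i)) ≃ α // ∀ x, P.partOf (e x) = μ.1 x.1} where
  toFun e := by
    have he (x y) : P.partOf (e.1 x) = P.partOf (e.1 y) ↔ x.1 = y.1 := by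
      simpa [partOf] using (fibers_eq_iff _ P).1 e.2 (e.1 x) (e.1 y)
    let label (i : ι) : P.parts := P.partOf (e.1 ⟨i, ⟨0, hs i⟩⟩)
    have hlabel (x) : P.partOf (e.1 x) = label x.1 := (he _ _).2 rfl
    have bij : Function.Bijective label := by
      refine ⟨fun i j hij => (he _ _).1 hij, fun b => ?_⟩
      obtain ⟨a, ha⟩ := P.nonempty_of_mem_parts b.2
      refine ⟨(e.1.symm a).1, ?_⟩
      rw [← hlabel, e.1.apply_symm_apply]
      exact Subtype.ext (P.part_eq_of_mem b.2 ha)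
    let μ := Equiv.ofBijective label bij
    refine ⟨⟨μ, fun i => ?_⟩, ⟨e.1, hlabel⟩⟩
    rw [← card_partOf_eq, ← Fintype.card_fiber_eq_of_equiv e.1 hlabel]
    exact (card_fiber_comp_fst s μ (μ i)).trans (congrArg s (μ.symm_apply_apply i))
  invFun μe := ⟨μe.2.1, (fibers_eq_iff _ P).2 fun a b => by
    have hpart (a) : P.partOf a = μe.1.1 (μe.2.1.symm a).1 := by
      rw [← μe.2.2, Equiv.apply_symm_apply]
    rw [← μe.1.1.injective.eq_iff, ← hpart, ← hpart, partOf, partOf, Subtype.mk.injEq]⟩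
  left_inv e := rfl
  right_inv μe := Sigma.subtype_ext (Subtype.ext (Equiv.ext fun i => μe.2.2 ⟨i, ⟨0, hs i⟩⟩)) rfl

theorem card_equiv_fibers_eq (hs : ∀ i, 0 < s i) (P : Finpartition (Finset.univ : Finset α)) :
    Fintype.card {e : (Σ i, Fin (s i)) ≃ α // fibers (fun a => (e.symm a).1) = P} =
      Fintype.card (P.Labelling s) * ∏ i, (s i)! := by
  rw [Fintype.card_congr (slotEquivSigmaLabelling hs P), Fintype.card_sigma,
    Finset.sum_congr rfl fun μ _ => card_equiv_partOf_eq s P μ.1 μ.2, Finset.sum_const,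
    Finset.card_univ, smul_eq_mul]

/-- Sorting the bijections from the slots onto `α` by the partition they induce. -/
theorem sum_card_labelling_mul (hs : ∀ i, 0 < s i) (hcard : ∑ i, s i = Fintype.card α) :
    ∑ P : Finpartition (Finset.univ : Finset α), Fintype.card (P.Labelling s) * ∏ i, (s i)! =
      (Fintype.card α)! := by
  have hslots : Fintype.card (Σ i, Fin (s i)) = Fintype.card α := by simp [hcard]
  rw [← hslots, ← Fintype.card_equiv (Fintype.equivOfCardEq hslots),
    ← Fintype.card_congr (Equiv.sigmaFiberEquiv fun e : (Σ i, Fin (s i)) ≃ α =>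
      fibers (fun a => (e.symm a).1)), Fintype.card_sigma]
  exact Finset.sum_congr rfl fun P _ => (card_equiv_fibers_eq hs P).symm

end Labelling

section PartitionType

open Finpartition

variable {α : Type*} [Fintype α] [DecidableEq α] {n : ℕ}

theorem card_labelling_eq (hα : Fintype.card α = n) (m : Fin n → ℕ)
    (P : Finpartition (Finset.univ : Finset α)) :
    Fintype.card (P.Labelling fun i : Σ j : Fin n, Fin (m j) => (i.1 : ℕ) + 1) =
      if P.partType n = m then ∏ j, (m j)! else 0 := by
  have card_pos (b : P.parts) : 0 < #(b : Finset α) :=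
    Finset.card_pos.2 (P.nonempty_of_mem_parts b.2)
  have card_le (b : P.parts) : #(b : Finset α) ≤ n := hα ▸ Finset.card_le_univ _
  let size (b : P.parts) : Fin n :=
    ⟨#(b : Finset α) - 1, by have := card_pos b; have := card_le b; omega⟩
  have size_eq_iff (b : P.parts) (j : Fin n) : size b = j ↔ #(b : Finset α) = j + 1 := by
    have := card_pos b; simp only [size, Fin.ext_iff]; omega
  have card_fiber_size (j : Fin n) :
      Fintype.card {b // size b = j} = P.partType n j := by
    simp only [size_eq_iff]
    simp [Fintype.card_subtype, Finset.filter_attach (fun b => #b = j + 1), partType]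
  have hcond (μ : (Σ j : Fin n, Fin (m j)) ≃ P.parts) :
      (∀ i, #(μ i : Finset α) = i.1 + 1) ↔ ∀ i, size (μ i) = i.1 :=
    forall_congr' fun i => (size_eq_iff _ _).symm
  rw [Fintype.card_congr (Equiv.subtypeEquivRight hcond)]
  split_ifs with htype
  · rw [Fintype.card_equiv_fiberwise fun j => by rw [card_fiber_fst, card_fiber_size, htype],
      DomMulAct.stabilizer_card]
    simp_rw [card_fiber_fst]
  · refine Fintype.card_eq_zero_iff.2 ⟨fun μ => htype <| funext fun j => ?_⟩
    rw [← card_fiber_size, ← Fintype.card_fiber_eq_of_equiv μ.1 μ.2, card_fiber_fst]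

theorem card_filter_partType_mul (hα : Fintype.card α = n) (m : Fin n → ℕ)
    (hm : ∑ j : Fin n, ((j : ℕ) + 1) * m j = n) :
    #{P : Finpartition (Finset.univ : Finset α) | P.partType n = m} *
        ((∏ j, (m j)!) * ∏ j : Fin n, ((j : ℕ) + 1)! ^ m j) = n ! := by
  have hslots : ∑ i : Σ j : Fin n, Fin (m j), ((i.1 : ℕ) + 1) = Fintype.card α := by
    calc _ = ∑ j : Fin n, ((j : ℕ) + 1) * m j := by simp [Fintype.sum_sigma, Nat.mul_comm]
      _ = Fintype.card α := hm.trans hα.symm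
  have hprod :
      ∏ i : Σ j : Fin n, Fin (m j), ((i.1 : ℕ) + 1)! = ∏ j : Fin n, ((j : ℕ) + 1)! ^ m j := by
    simp [Fintype.prod_sigma]
  have := sum_card_labelling_mul (fun i => Nat.succ_pos _) hslots
  simpa only [card_labelling_eq hα, hprod, ite_mul, zero_mul, Finset.sum_ite,
    Finset.sum_const_zero, add_zero, Finset.sum_const, smul_eq_mul, hα] using this

end PartitionType

theorem hier_explicit_formula_general (n : ℕ) :
    (hier n : ℚ) =
      ∑ m ∈ (Fintype.piFinset fun _ : Fin n => Finset.range (n + 1)).filter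
          (fun m => ∑ j : Fin n, ((j : ℕ) + 1) * m j = n),
        (n ! : ℚ) * (∏ j : Fin n, (orderedBell ((j : ℕ) + 1) : ℚ) ^ m j) /
          (∏ j : Fin n, (m j)! * (((j : ℕ) + 1)! : ℚ) ^ m j) := by
  have hcard : #(Finset.univ : Finset (Fin n)) = n := by simp
  have maps_to (P : Finpartition (Finset.univ : Finset (Fin n))) :
      P.partType n ∈
        (Fintype.piFinset fun _ : Fin n => Finset.range (n + 1)).filter
          (fun m => ∑ j : Fin n, ((j : ℕ) + 1) * m j = n) := by
    refine Finset.mem_filter.2 ⟨Fintype.mem_piFinset.2 fun j => ?_,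
      P.sum_succ_mul_partType hcard⟩
    exact Finset.mem_range.2 (Nat.lt_succ_of_le ((P.partType_le n j).trans hcard.le))
  rw [hier, natCard_hierarchicalOrdering, Nat.cast_sum,
    ← Finset.sum_fiberwise_of_maps_to fun P _ => maps_to P]
  refine Finset.sum_congr rfl fun m hm => ?_
  have hcount := card_filter_partType_mul (Fintype.card_fin n) m (Finset.mem_filter.1 hm).2
  rw [Finset.sum_congr rfl fun P hP => by
      rw [Nat.cast_prod, P.prod_parts_card_eq_prod_fin hcard.le fun k => (orderedBell k : ℚ),
        (Finset.mem_filter.1 hP).2],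
    Finset.sum_const, nsmul_eq_mul, eq_div_iff (by positivity), ← hcount]
  push_cast
  rw [Finset.prod_mul_distrib]
  ring

/-- **Explicit formula for `H_n`.** For every `n ≥ 1`,
`H_n = ∑_{(m_1,…,m_n)} n! · (∏_j B_j^{m_j}) / (∏_j m_j!·(j!)^{m_j})`, the sum being over all
tuples `(m_1,…,m_n)` of nonnegative integers with `∑_j j·m_j = n`.  (Here `m : Fin n → ℕ`
encodes the tuple via `m_j = m ⟨j-1⟩`; since `∑_j j·m_j = n` forces each `m_j ≤ n`, the
finite index set below contains every solution.) -/
theorem hier_explicit_formula (n : ℕ) (hn : 1 ≤ n) :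
    (hier n : ℚ) =
      ∑ m ∈ (Fintype.piFinset fun _ : Fin n => Finset.range (n + 1)).filter
          (fun m => ∑ j : Fin n, ((j : ℕ) + 1) * m j = n),
        (n ! : ℚ) * (∏ j : Fin n, (orderedBell ((j : ℕ) + 1) : ℚ) ^ m j) /
          (∏ j : Fin n, (m j)! * (((j : ℕ) + 1)! : ℚ) ^ m j) :=
  hier_explicit_formula_general n
end

section
/- For every n ≥ 0, U_n equals the coefficient of x^n in the finite product ∏_{j=1}^{n} (1 − x^j)^{−2^{j−1}} of formal power series over ℚ (equivalently, U(x) = ∏_{j≥1} (1 − x^j)^{−2^{j−1}} where U(x) = ∑_{n≥0} U_n x^n), where (1 − x^j)^{−1} denotes the multiplicative inverse of 1 − x^j as a formal power series. -/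
open Finset PowerSeries Filter Nat

/-- `U n`: the number of unlabeled hierarchical orderings of total size `n`, i.e. multisets of
compositions of positive integers (nonempty finite sequences of positive integers) whose
sizes sum to `n`.  (`U 0 = 1`, via the empty multiset.) -/
noncomputable def uhier (n : ℕ) : ℕ :=
  Nat.card {M : Multiset (List ℕ) //
    (∀ c ∈ M, c ≠ [] ∧ ∀ x ∈ c, 0 < x) ∧ (M.map List.sum).sum = n}

/-!
There are `2 ^ (j - 1)` compositions of `j`, so the product is `∏ (1 - x ^ |c|)⁻¹` over all
compositions `c` of size at most `n`. Each factor is the geometric series in `x ^ |c|`, so the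
coefficient of `x ^ n` counts the choices of multiplicities `k_c` with `∑ k_c |c| = n`, i.e. the
multisets of compositions of total size `n`.
-/

namespace PowerSeries

variable {K : Type*} [Field K]

theorem inv_one_sub_X_pow_eq_expand {k : ℕ} (hk : k ≠ 0) :
    (1 - X ^ k : K⟦X⟧)⁻¹ = expand k hk (mk 1) := by
  refine ((eq_inv_iff_mul_eq_one (by simp [hk])).2 ?_).symm
  simpa using congr_arg (expand k hk) (mk_one_mul_one_sub_eq_one K)

theorem coeff_inv_one_sub_X_pow {k : ℕ} (hk : k ≠ 0) (n : ℕ) :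
    coeff n (1 - X ^ k : K⟦X⟧)⁻¹ = if k ∣ n then 1 else 0 := by
  simp [inv_one_sub_X_pow_eq_expand hk, coeff_expand]

theorem coeff_prod_inv_one_sub_X_pow {ι : Type*} [DecidableEq ι] (s : Finset ι) (w : ι → ℕ)
    (hw : ∀ i ∈ s, w i ≠ 0) (n : ℕ) :
    coeff n (∏ i ∈ s, (1 - X ^ w i : K⟦X⟧)⁻¹) =
      #{l ∈ s.finsuppAntidiag n | ∀ i ∈ s, w i ∣ l i} := by
  rw [coeff_prod, ← sum_boole]
  refine sum_congr rfl fun l _ => ?_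
  rw [← prod_boole]
  exact prod_congr rfl fun i hi => coeff_inv_one_sub_X_pow (hw i hi) _

end PowerSeries

section WeightedMultisets

variable {ι : Type*}

noncomputable def Finsupp.divPointwise (l : ι →₀ ℕ) (w : ι → ℕ) : ι →₀ ℕ :=
  Finsupp.onFinset l.support (fun i => l i / w i)
    fun i hi => Finsupp.mem_support_iff.2 fun h => hi (by simp [h])

@[simp]
theorem Finsupp.divPointwise_apply (l : ι →₀ ℕ) (w : ι → ℕ) (i : ι) :
    l.divPointwise w i = l i / w i := rfl

variable [DecidableEq ι]

theorem Multiset.sum_map_eq_sum_mul_count {s : Finset ι} {m : Multiset ι} (hm : ∀ i ∈ m, i ∈ s)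
    (w : ι → ℕ) :
    (m.map w).sum = ∑ i ∈ s, w i * m.count i := by
  simp only [Finset.sum_multiset_map_count, smul_eq_mul, mul_comm (m.count _)]
  refine Finset.sum_subset (fun i hi => hm i (Multiset.mem_toFinset.1 hi)) fun i _ hi => ?_
  rw [Multiset.count_eq_zero.2 (mt Multiset.mem_toFinset.2 hi), mul_zero]

variable {s : Finset ι} {w : ι → ℕ}

attribute [local instance] Finsupp.pointwiseScalarSemiring

/-- `m` corresponds to the exponents `l i = w i * count i m` picked from the factors of
`∏ i ∈ s, (1 - X ^ w i)⁻¹`. -/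
noncomputable def multisetEquivFinsuppAntidiagDvd (hw : ∀ i ∈ s, w i ≠ 0) (n : ℕ) :
    {m : Multiset ι // (∀ i ∈ m, i ∈ s) ∧ (m.map w).sum = n} ≃
      {l // l ∈ {l ∈ s.finsuppAntidiag n | ∀ i ∈ s, w i ∣ l i}} where
  toFun m := ⟨w • Multiset.toFinsupp m.1, by
    obtain ⟨m, hms, hmn⟩ := m
    simp only [mem_filter, mem_finsuppAntidiag, Finsupp.coe_pointwise_smul, smul_eq_mul,
      Pi.mul_apply, Multiset.toFinsupp_apply]
    refine ⟨⟨(Multiset.sum_map_eq_sum_mul_count hms w).symm.trans hmn, fun i hi => hms i ?_⟩,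
      fun i _ => dvd_mul_right _ _⟩
    exact Multiset.count_ne_zero.1 (right_ne_zero_of_mul (Finsupp.mem_support_iff.1 hi))⟩
  invFun l := ⟨Finsupp.toMultiset (l.1.divPointwise w), by
    obtain ⟨l, hl⟩ := l
    simp only [mem_filter, mem_finsuppAntidiag] at hl
    obtain ⟨⟨hln, hls⟩, hdvd⟩ := hl
    have hms : ∀ i ∈ Finsupp.toMultiset (l.divPointwise w), i ∈ s := fun i hi =>
      hls (Finsupp.support_onFinset_subset ((Finsupp.mem_toMultiset _ _).1 hi))
    refine ⟨hms, ?_⟩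
    rw [Multiset.sum_map_eq_sum_mul_count hms, ← hln]
    refine sum_congr rfl fun i hi => ?_
    simp [Nat.mul_div_cancel' (hdvd i hi)]⟩
  left_inv m := by
    obtain ⟨m, hms, hmn⟩ := m
    ext i
    by_cases hi : i ∈ s
    · simp [hw i hi]
    · simp [Multiset.count_eq_zero.2 (mt (hms i) hi)]
  right_inv l := by
    obtain ⟨l, hl⟩ := l
    simp only [mem_filter, mem_finsuppAntidiag] at hl
    obtain ⟨⟨hln, hls⟩, hdvd⟩ := hl
    ext i
    by_cases hi : i ∈ s
    · simp [Nat.mul_div_cancel' (hdvd i hi)]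
    · simp [Finsupp.notMem_support_iff.1 (mt (@hls i) hi)]

theorem card_multisets_eq_card_finsuppAntidiag_dvd (hw : ∀ i ∈ s, w i ≠ 0) (n : ℕ) :
    Nat.card {m : Multiset ι // (∀ i ∈ m, i ∈ s) ∧ (m.map w).sum = n} =
      #{l ∈ s.finsuppAntidiag n | ∀ i ∈ s, w i ∣ l i} := by
  rw [Nat.card_congr (multisetEquivFinsuppAntidiagDvd hw n), Nat.card_eq_finsetCard]

end WeightedMultisets

def compositionsUpTo (n : ℕ) : Finset (List ℕ) :=
  (Icc 1 n).biUnion fun j => univ.image (Composition.blocks : Composition j → List ℕ)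

theorem mem_compositionsUpTo {n : ℕ} {c : List ℕ} :
    c ∈ compositionsUpTo n ↔ (c ≠ [] ∧ ∀ x ∈ c, 0 < x) ∧ c.sum ≤ n := by
  simp only [compositionsUpTo, mem_biUnion, mem_Icc, mem_image, mem_univ, true_and]
  constructor
  · rintro ⟨j, ⟨hj1, hjn⟩, comp, rfl⟩
    refine ⟨⟨fun h => ?_, fun x hx => comp.blocks_pos hx⟩, comp.blocks_sum.trans_le hjn⟩
    have := comp.blocks_sum
    rw [h, List.sum_nil] at this
    omega
  · rintro ⟨⟨hne, hpos⟩, hn⟩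
    exact ⟨c.sum, ⟨List.sum_pos c hpos hne, hn⟩, ⟨c, hpos _, rfl⟩, rfl⟩

theorem prod_compositionsUpTo {M : Type*} [CommMonoid M] (f : ℕ → M) (n : ℕ) :
    ∏ c ∈ compositionsUpTo n, f c.sum = ∏ j ∈ Icc 1 n, f j ^ 2 ^ (j - 1) := by
  rw [compositionsUpTo, prod_biUnion]
  · refine prod_congr rfl fun j _ => ?_
    rw [prod_image fun a _ b _ h => Composition.ext h]
    simp [Composition.blocks_sum, composition_card]
  · intro j _ k _ hjk
    refine disjoint_left.2 fun c hj hk => hjk ?_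
    simp only [mem_image, mem_univ, true_and] at hj hk
    obtain ⟨a, rfl⟩ := hj
    obtain ⟨b, hb⟩ := hk
    rw [← a.blocks_sum, ← hb, b.blocks_sum]

theorem uhier_eq_card (n : ℕ) :
    uhier n = Nat.card {M : Multiset (List ℕ) //
      (∀ c ∈ M, c ∈ compositionsUpTo n) ∧ (M.map List.sum).sum = n} := by
  refine Nat.card_congr (Equiv.subtypeEquivRight fun M => ?_)
  simp only [mem_compositionsUpTo]
  refine and_congr_left fun hM => forall₂_congr fun c hc => (and_iff_left_of_imp fun _ => ?_).symm
  exact hM ▸ Multiset.le_sum_of_mem (Multiset.mem_map_of_mem _ hc)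

/-- **Theorem 2 (unlabeled case).** For every `n ≥ 0`, `U_n` is the coefficient of `xⁿ` in
`∏_{j=1}^{n} (1 − x^j)^{−2^{j−1}}` over `ℚ` (equivalently,
`U(x) = ∏_{j≥1} (1 − x^j)^{−2^{j−1}}`). -/
theorem ogf_uhier (n : ℕ) :
    (uhier n : ℚ) =
      PowerSeries.coeff (R := ℚ) n
        (∏ j ∈ Finset.Icc 1 n, ((1 - (PowerSeries.X : PowerSeries ℚ) ^ j)⁻¹) ^ 2 ^ (j - 1)) := by
  have hsum : ∀ c ∈ compositionsUpTo n, c.sum ≠ 0 := fun c hc =>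
    have ⟨⟨hne, hpos⟩, _⟩ := mem_compositionsUpTo.1 hc
    (List.sum_pos c hpos hne).ne'
  rw [← prod_compositionsUpTo (fun j => (1 - X ^ j : ℚ⟦X⟧)⁻¹),
    coeff_prod_inv_one_sub_X_pow _ _ hsum, ← card_multisets_eq_card_finsuppAntidiag_dvd hsum,
    uhier_eq_card]
end

section
/- For every n ≥ 1, the numbers U_n satisfy the recurrence n · U_n = ∑_{k=1}^{n} α_k · U_{n−k}, where α_k = ∑_{d | k} d · 2^{d−1} (the sum being over the positive divisors d of k). -/
open Finset PowerSeries Filter Nat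

/-- The predicate defining unlabeled hierarchical orderings of total size `n`. -/
def IsHO (n : ℕ) (M : Multiset (List ℕ)) : Prop :=
  (∀ c ∈ M, c ≠ [] ∧ ∀ x ∈ c, 0 < x) ∧ (M.map List.sum).sum = n

lemma List.one_le_sum_of_ho {c : List ℕ} (hne : c ≠ []) (hpos : ∀ x ∈ c, 0 < x) :
    1 ≤ c.sum := by
  cases c with
  | nil => exact absurd rfl hne
  | cons a t =>
      have : 0 < a := hpos a (by simp)
      simp only [List.sum_cons]
      omega

lemma Multiset.sum_le_sum_of_le' {s t : Multiset ℕ} (h : s ≤ t) : s.sum ≤ t.sum := by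
  obtain ⟨u, rfl⟩ := Multiset.le_iff_exists_add.mp h
  simp

/-- The finset of compositions of `d` as lists. -/
noncomputable def compF (d : ℕ) : Finset (List ℕ) :=
  (Finset.univ : Finset (Composition d)).image Composition.blocks

lemma mem_compF {d : ℕ} {c : List ℕ} :
    c ∈ compF d ↔ (∀ x ∈ c, 0 < x) ∧ c.sum = d := by
  constructor
  · rintro hc
    simp only [compF, Finset.mem_image, Finset.mem_univ, true_and] at hc
    obtain ⟨C, rfl⟩ := hc
    exact ⟨fun x hx => C.blocks_pos hx, C.blocks_sum⟩
  · rintro ⟨h1, h2⟩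
    simp only [compF, Finset.mem_image, Finset.mem_univ, true_and]
    exact ⟨⟨c, fun {i} hi => h1 i hi, h2⟩, rfl⟩

lemma card_compF (d : ℕ) : (compF d).card = 2 ^ (d - 1) := by
  rw [compF, Finset.card_image_of_injective _ (fun a b h => Composition.ext h),
    Finset.card_univ, composition_card]

lemma compF_ne_nil {d : ℕ} (hd : 1 ≤ d) {c : List ℕ} (hc : c ∈ compF d) : c ≠ [] := by
  rw [mem_compF] at hc
  intro h
  rw [h] at hc
  simp at hc
  omega

/-- Finiteness of the set of hierarchical orderings of total size `n`. -/
lemma finHO (n : ℕ) : {M : Multiset (List ℕ) | IsHO n M}.Finite := by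
  induction n using Nat.strong_induction_on with
  | _ n ih =>
    rcases Nat.eq_zero_or_pos n with rfl | hn
    · apply Set.Finite.subset (Set.finite_singleton (0 : Multiset (List ℕ)))
      rintro M ⟨h1, h2⟩
      simp only [Set.mem_singleton_iff]
      by_contra hM
      obtain ⟨c, hc⟩ := Multiset.exists_mem_of_ne_zero hM
      have h3 := Multiset.sum_eq_zero_iff.mp h2 c.sum (Multiset.mem_map_of_mem _ hc)
      have := List.one_le_sum_of_ho (h1 c hc).1 (h1 c hc).2
      omega
    · have : {M : Multiset (List ℕ) | IsHO n M} ⊆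
          ⋃ k ∈ Set.Icc 1 n,
            (fun p : List ℕ × Multiset (List ℕ) => p.1 ::ₘ p.2) ''
              ((compF k : Set (List ℕ)) ×ˢ {M | IsHO (n - k) M}) := by
        rintro M ⟨h1, h2⟩
        have hM : M ≠ 0 := by
          rintro rfl
          simp at h2
          omega
        obtain ⟨c, hc⟩ := Multiset.exists_mem_of_ne_zero hM
        have hce := (Multiset.cons_erase hc).symm
        have hsum : c.sum + ((M.erase c).map List.sum).sum = n := by
          rw [hce] at h2
          simpa using h2
        have hc1 : 1 ≤ c.sum := List.one_le_sum_of_ho (h1 c hc).1 (h1 c hc).2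
        have hcn : c.sum ≤ n := by omega
        refine Set.mem_biUnion (Set.mem_Icc.mpr ⟨hc1, hcn⟩) ?_
        refine ⟨⟨c, M.erase c⟩, ⟨?_, ?_, ?_⟩, hce.symm⟩
        · exact mem_compF.mpr ⟨(h1 c hc).2, rfl⟩
        · intro x hx
          exact h1 x (Multiset.mem_of_mem_erase hx)
        · show ((M.erase c).map List.sum).sum = n - c.sum
          omega
      apply Set.Finite.subset _ this
      apply Set.Finite.biUnion (Set.finite_Icc 1 n)
      intro k hk
      rw [Set.mem_Icc] at hk
      apply Set.Finite.image
      exact Set.Finite.prod (compF k).finite_toSet (ih (n - k) (by omega))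

/-- The finset of hierarchical orderings of total size `n`. -/
noncomputable def hoF (n : ℕ) : Finset (Multiset (List ℕ)) := (finHO n).toFinset

lemma mem_hoF {n : ℕ} {M : Multiset (List ℕ)} : M ∈ hoF n ↔ IsHO n M :=
  Set.Finite.mem_toFinset _

lemma uhier_eq (n : ℕ) : uhier n = (hoF n).card := by
  have : uhier n = Nat.card {M : Multiset (List ℕ) | IsHO n M} := rfl
  rw [this, Nat.card_coe_set_eq, Set.ncard_eq_toFinset_card _ (finHO n)]
  rfl

/-- Key bound: for `M` a hierarchical ordering of size `n` and `c` a composition of `d`,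
`count c M * d ≤ n`. -/
lemma count_mul_le {n d : ℕ} {M : Multiset (List ℕ)} (hM : M ∈ hoF n)
    {c : List ℕ} (hc : c ∈ compF d) : M.count c * d ≤ n := by
  obtain ⟨h1, h2⟩ := mem_hoF.mp hM
  have hrep : Multiset.replicate (M.count c) c ≤ M := by
    rw [Multiset.le_iff_count]
    intro x
    rw [Multiset.count_replicate]
    split <;> simp_all
  have := Multiset.sum_le_sum_of_le' (Multiset.map_le_map (f := List.sum) hrep)
  rw [Multiset.map_replicate, Multiset.sum_replicate, smul_eq_mul, h2,
    (mem_compF.mp hc).2] at this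
  exact this

/-- The key bijection: hierarchical orderings of size `n` containing at least `i` copies
of a composition `c` of `d` correspond to hierarchical orderings of size `n - i*d`. -/
lemma card_filter_count (n d i : ℕ) (c : List ℕ) (hc : c ∈ compF d) (hd : 1 ≤ d)
    (hi : 1 ≤ i) :
    ((hoF n).filter (fun M => i ≤ M.count c)).card
      = if i * d ≤ n then (hoF (n - i * d)).card else 0 := by
  obtain ⟨hcpos, hcsum⟩ := mem_compF.mp hc
  have hcne : c ≠ [] := compF_ne_nil hd hc
  split
  case isTrue h =>
    apply Finset.card_bij' (fun M _ => M - Multiset.replicate i c)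
      (fun M' _ => M' + Multiset.replicate i c)
    · -- maps into
      intro M hM
      rw [Finset.mem_filter] at hM
      obtain ⟨hMho, hMcount⟩ := hM
      obtain ⟨h1, h2⟩ := mem_hoF.mp hMho
      have hrep : Multiset.replicate i c ≤ M := by
        rw [Multiset.le_iff_count]
        intro x
        rw [Multiset.count_replicate]
        split <;> simp_all
      rw [mem_hoF]
      constructor
      · intro x hx
        exact h1 x (Multiset.mem_of_le (Multiset.sub_le_self _ _) hx)
      · have heq : (M - Multiset.replicate i c) + Multiset.replicate i c = M :=
          tsub_add_cancel_of_le hrep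
        have : (((M - Multiset.replicate i c) + Multiset.replicate i c).map
            List.sum).sum = n := by rw [heq]; exact h2
        rw [Multiset.map_add, Multiset.sum_add, Multiset.map_replicate,
          Multiset.sum_replicate, smul_eq_mul, hcsum] at this
        omega
    · -- inverse maps into
      intro M' hM'
      obtain ⟨h1, h2⟩ := mem_hoF.mp hM'
      rw [Finset.mem_filter]
      constructor
      · rw [mem_hoF]
        constructor
        · intro x hx
          rw [Multiset.mem_add] at hx
          rcases hx with hx | hx
          · exact h1 x hx
          · rw [Multiset.eq_of_mem_replicate hx]
            exact ⟨hcne, hcpos⟩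
        · rw [Multiset.map_add, Multiset.sum_add, Multiset.map_replicate,
            Multiset.sum_replicate, smul_eq_mul, hcsum, h2]
          omega
      · rw [Multiset.count_add, Multiset.count_replicate_self]
        omega
    · intro M hM
      rw [Finset.mem_filter] at hM
      have hrep : Multiset.replicate i c ≤ M := by
        rw [Multiset.le_iff_count]
        intro x
        rw [Multiset.count_replicate]
        split <;> simp_all
      exact tsub_add_cancel_of_le hrep
    · intro M' _
      exact add_tsub_cancel_right _ _
  case isFalse h =>
    rw [Finset.card_eq_zero, Finset.filter_eq_empty_iff]
    intro M hM
    simp only [not_le]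
    by_contra hcount
    push_neg at hcount
    have := count_mul_le hM hc
    have : i * d ≤ M.count c * d := Nat.mul_le_mul_right d hcount
    omega

/-- Total size decomposes as a sum over all compositions with multiplicity. -/
lemma size_decomp {n : ℕ} {M : Multiset (List ℕ)} (hM : M ∈ hoF n) :
    ∑ d ∈ Finset.Icc 1 n, ∑ c ∈ compF d, M.count c * d = n := by
  obtain ⟨h1, h2⟩ := mem_hoF.mp hM
  have hdisj : (↑(Finset.Icc 1 n) : Set ℕ).PairwiseDisjoint compF := by
    intro a _ b _ hab
    simp only [Finset.disjoint_left]
    intro c hca hcb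
    exact hab ((mem_compF.mp hca).2 ▸ (mem_compF.mp hcb).2)
  have step1 : ∑ d ∈ Finset.Icc 1 n, ∑ c ∈ compF d, M.count c * d
      = ∑ c ∈ (Finset.Icc 1 n).biUnion compF, M.count c * c.sum := by
    rw [Finset.sum_biUnion hdisj]
    apply Finset.sum_congr rfl
    intro d _
    apply Finset.sum_congr rfl
    intro c hc
    rw [(mem_compF.mp hc).2]
  rw [step1]
  have hsub : M.toFinset ⊆ (Finset.Icc 1 n).biUnion compF := by
    intro c hc
    rw [Multiset.mem_toFinset] at hc
    have hpos := (h1 c hc).2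
    have hc1 : 1 ≤ c.sum := List.one_le_sum_of_ho (h1 c hc).1 hpos
    have hcn : c.sum ≤ n := by
      have : c.sum ∈ M.map List.sum := Multiset.mem_map_of_mem _ hc
      calc c.sum ≤ (M.map List.sum).sum :=
            Multiset.single_le_sum (fun x _ => Nat.zero_le x) _ this
        _ = n := h2
    exact Finset.mem_biUnion.mpr ⟨c.sum, Finset.mem_Icc.mpr ⟨hc1, hcn⟩,
      mem_compF.mpr ⟨hpos, rfl⟩⟩
  rw [← Finset.sum_subset hsub (fun c _ hcM => by
    rw [Multiset.count_eq_zero_of_notMem (by simpa using hcM)]; ring)]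
  rw [← h2, Finset.sum_multiset_map_count]
  simp [mul_comm]

lemma filter_Icc_eq {n d : ℕ} (hd : 1 ≤ d) :
    (Finset.Icc 1 n).filter (fun i => i * d ≤ n) = Finset.Icc 1 (n / d) := by
  ext i
  simp only [Finset.mem_filter, Finset.mem_Icc]
  constructor
  · rintro ⟨⟨h1, _⟩, h3⟩
    exact ⟨h1, (Nat.le_div_iff_mul_le hd).mpr h3⟩
  · rintro ⟨h1, h2⟩
    have h3 := (Nat.le_div_iff_mul_le hd).mp h2
    have : i ≤ i * d := Nat.le_mul_of_pos_right i hd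
    exact ⟨⟨h1, by omega⟩, h3⟩

/-- Summing the count of a fixed composition over all hierarchical orderings of size `n`. -/
lemma sum_count_eq (n d : ℕ) (c : List ℕ) (hc : c ∈ compF d) (hd : 1 ≤ d) :
    ∑ M ∈ hoF n, M.count c = ∑ i ∈ Finset.Icc 1 (n / d), (hoF (n - i * d)).card := by
  have step1 : ∀ M ∈ hoF n, M.count c
      = ∑ i ∈ Finset.Icc 1 n, if i ≤ M.count c then 1 else 0 := by
    intro M hM
    have hle : M.count c ≤ n := by
      have := count_mul_le hM hc
      have : M.count c ≤ M.count c * d := Nat.le_mul_of_pos_right _ hd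
      omega
    have heq : (Finset.Icc 1 n).filter (fun i => i ≤ M.count c)
        = Finset.Icc 1 (M.count c) := by
      ext i
      simp only [Finset.mem_filter, Finset.mem_Icc]
      omega
    symm
    rw [← Finset.sum_filter, heq]
    simp
  rw [Finset.sum_congr rfl step1, Finset.sum_comm]
  have step2 : ∀ i ∈ Finset.Icc 1 n,
      (∑ M ∈ hoF n, if i ≤ M.count c then 1 else 0)
        = if i * d ≤ n then (hoF (n - i * d)).card else 0 := by
    intro i hi
    rw [← Finset.sum_filter, Finset.sum_const, smul_eq_mul, mul_one]
    exact card_filter_count n d i c hc hd (Finset.mem_Icc.mp hi).1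
  rw [Finset.sum_congr rfl step2, ← Finset.sum_filter, filter_Icc_eq hd]

/-- **Recurrence for `U_n`.** For every `n ≥ 1`, `n·U_n = ∑_{k=1}^{n} α_k·U_{n−k}`, where
`α_k = ∑_{d ∣ k} d·2^{d−1}` (sum over the positive divisors of `k`). -/
theorem uhier_recurrence (n : ℕ) (hn : 1 ≤ n) :
    n * uhier n =
      ∑ k ∈ Finset.Icc 1 n, (∑ d ∈ k.divisors, d * 2 ^ (d - 1)) * uhier (n - k) := by
  simp only [uhier_eq]
  -- LHS computation
  have lhs : n * (hoF n).card
      = ∑ d ∈ Finset.Icc 1 n, ∑ i ∈ Finset.Icc 1 (n / d),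
          d * 2 ^ (d - 1) * (hoF (n - i * d)).card := by
    have h1 : n * (hoF n).card = ∑ M ∈ hoF n, n := by
      rw [Finset.sum_const, smul_eq_mul, mul_comm]
    rw [h1, Finset.sum_congr rfl (fun M hM => (size_decomp hM).symm), Finset.sum_comm]
    apply Finset.sum_congr rfl
    intro d hd
    obtain ⟨hd1, _⟩ := Finset.mem_Icc.mp hd
    rw [Finset.sum_comm]
    have : ∀ c ∈ compF d, (∑ M ∈ hoF n, M.count c * d)
        = (∑ i ∈ Finset.Icc 1 (n / d), (hoF (n - i * d)).card) * d := by
      intro c hc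
      rw [← Finset.sum_mul, sum_count_eq n d c hc hd1]
    rw [Finset.sum_congr rfl this, Finset.sum_const, card_compF, smul_eq_mul,
      Finset.sum_mul, Finset.mul_sum]
    apply Finset.sum_congr rfl
    intro i _
    ring
  rw [lhs]
  -- RHS: reindex the divisor sum
  have rhs : ∑ k ∈ Finset.Icc 1 n, (∑ d ∈ k.divisors, d * 2 ^ (d - 1)) * (hoF (n - k)).card
      = ∑ k ∈ Finset.Icc 1 n, ∑ d ∈ k.divisors,
          d * 2 ^ (d - 1) * (hoF (n - k)).card := by
    apply Finset.sum_congr rfl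
    intro k _
    rw [Finset.sum_mul]
  rw [rhs, Finset.sum_sigma' (Finset.Icc 1 n) (fun k => k.divisors),
    Finset.sum_sigma' (Finset.Icc 1 n) (fun d => Finset.Icc 1 (n / d))]
  apply Finset.sum_bij' (i := fun (p : Σ _ : ℕ, ℕ) _ => (⟨p.2 * p.1, p.1⟩ : Σ _ : ℕ, ℕ))
    (j := fun (p : Σ _ : ℕ, ℕ) _ => (⟨p.2, p.1 / p.2⟩ : Σ _ : ℕ, ℕ))
  · rintro ⟨d, i⟩ hp
    rw [Finset.mem_sigma, Finset.mem_Icc, Finset.mem_Icc] at hp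
    dsimp only at hp ⊢
    obtain ⟨⟨hd1, hdn⟩, hi1, hin⟩ := hp
    have hmul : i * d ≤ n := (Nat.le_div_iff_mul_le hd1).mp hin
    rw [Finset.mem_sigma, Finset.mem_Icc, Nat.mem_divisors]
    dsimp only
    refine ⟨⟨?_, hmul⟩, ⟨dvd_mul_left d i, ?_⟩⟩ <;> nlinarith
  · rintro ⟨k, d⟩ hp
    rw [Finset.mem_sigma, Finset.mem_Icc, Nat.mem_divisors] at hp
    dsimp only at hp ⊢
    obtain ⟨⟨hk1, hkn⟩, hdk, hk0⟩ := hp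
    have hd1 : 1 ≤ d := Nat.pos_of_dvd_of_pos hdk (by omega)
    have hdk' : d ≤ k := Nat.le_of_dvd (by omega) hdk
    rw [Finset.mem_sigma, Finset.mem_Icc, Finset.mem_Icc]
    dsimp only
    refine ⟨⟨hd1, by omega⟩, ?_, Nat.div_le_div_right hkn⟩
    rw [Nat.one_le_div_iff (by omega)]
    exact hdk'
  · rintro ⟨d, i⟩ hp
    rw [Finset.mem_sigma, Finset.mem_Icc] at hp
    dsimp only at hp ⊢
    have hd1 : 0 < d := hp.1.1
    simp [Nat.mul_div_cancel _ hd1]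
  · rintro ⟨k, d⟩ hp
    rw [Finset.mem_sigma, Nat.mem_divisors] at hp
    dsimp only at hp ⊢
    simp [Nat.div_mul_cancel hp.2.1]
  · rintro ⟨d, i⟩ _
    rfl
end

section
/- As formal power series over ℚ, ∑_{n≥0} (x^n/n!) · ( ∑_{i=1}^{n} ((i+1)!/2) · S(n,i) ) = −(1/2) · (e^x − 1)(e^x − 3) · ((e^x − 2)^{−2}); equivalently, 2 · (e^x − 2)² · ∑_{n≥0} (x^n/n!) ∑_{i=1}^{n} ((i+1)!/2) S(n,i) = −(e^x − 1)(e^x − 3), where e^x denotes the formal exponential series and (e^x − 2)^{−1} the multiplicative inverse of the formal power series e^x − 2. -/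
/-!
Surjections `Fin n → Fin k` are the partitions of `Fin n` into `k` blocks together with a
labelling of the blocks, and inclusion–exclusion counts them as `n!·[xⁿ](eˣ - 1)ᵏ`; hence
`[xⁿ](eˣ - 1)ᵏ = k!·S(n,k)/n!`. With `u = eˣ - 1` the series is therefore `½·F(u)` for
`F(y) = ∑_{i≥1} (i+1)yⁱ = (1 - y)⁻² - 1`, and `F(y)(y - 1)² = 2y - y²`, while `eˣ - 2 = u - 1`
and `eˣ - 3 = u - 2`. Since `X ∣ u`, the composite `F(u)` agrees with the polynomial partial
sum `∑_{i≤N} (i+1)uⁱ` modulo `X^(N+1)`, and for the partial sum the identity holds up to a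
multiple of `u^(N+1)`.
-/

open Finset PowerSeries Filter Nat

/-- The Stirling number of the second kind `S(n,k)`: the number of partitions of an
`n`-element set into `k` nonempty blocks. -/
noncomputable def stirling2 (n k : ℕ) : ℕ :=
  Nat.card {P : Finpartition (Finset.univ : Finset (Fin n)) // P.parts.card = k}

open Function

namespace Finpartition

variable {α β : Type*} [Fintype α] [DecidableEq α]

theorem parts_eq_image_part (P : Finpartition (univ : Finset α)) :
    P.parts = univ.image P.part := by
  ext t
  refine ⟨fun ht => ?_, fun ht => ?_⟩
  · obtain ⟨x, hx⟩ := P.nonempty_of_mem_parts ht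
    exact mem_image.2 ⟨x, mem_univ x, P.part_eq_of_mem ht hx⟩
  · obtain ⟨x, -, rfl⟩ := mem_image.1 ht
    exact P.part_mem.2 (mem_univ x)

def liftParts (P : Finpartition (univ : Finset α)) (g : P.parts → β) : α → β :=
  fun x => g ⟨P.part x, P.part_mem.2 (mem_univ x)⟩

theorem liftParts_apply_of_mem {P : Finpartition (univ : Finset α)} (g : P.parts → β)
    {t : Finset α} (ht : t ∈ P.parts) {x : α} (hx : x ∈ t) : P.liftParts g x = g ⟨t, ht⟩ := by
  simp only [liftParts, P.part_eq_of_mem ht hx]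

theorem surjective_liftParts {P : Finpartition (univ : Finset α)} {g : P.parts → β}
    (hg : Surjective g) : Surjective (P.liftParts g) := by
  intro b
  obtain ⟨⟨t, ht⟩, rfl⟩ := hg b
  obtain ⟨x, hx⟩ := P.nonempty_of_mem_parts ht
  exact ⟨x, liftParts_apply_of_mem g ht hx⟩

theorem liftParts_injective (P : Finpartition (univ : Finset α)) :
    Injective (P.liftParts : (P.parts → β) → α → β) := by
  intro g h hgh
  funext ⟨t, ht⟩
  obtain ⟨x, hx⟩ := P.nonempty_of_mem_parts ht
  rw [← liftParts_apply_of_mem g ht hx, ← liftParts_apply_of_mem h ht hx, hgh]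

variable [DecidableEq β]

def ker (f : α → β) : Finpartition (univ : Finset α) :=
  haveI : DecidableRel (Setoid.ker f).r := fun x y => decEq (f x) (f y)
  ofSetoid (Setoid.ker f)

theorem mem_part_ker {f : α → β} {x y : α} : y ∈ (ker f).part x ↔ f y = f x := by
  rw [ker, mem_part_ofSetoid_iff_rel, Setoid.ker_def, eq_comm]

theorem apply_eq_of_mem_ker_parts {f : α → β} {t : Finset α} (ht : t ∈ (ker f).parts)
    {x y : α} (hx : x ∈ t) (hy : y ∈ t) : f y = f x := by
  rw [← (ker f).part_eq_of_mem ht hx] at hy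
  exact mem_part_ker.1 hy

theorem ker_liftParts {P : Finpartition (univ : Finset α)} {g : P.parts → β}
    (hg : Injective g) : ker (P.liftParts g) = P := by
  have hpart (x : α) : (ker (P.liftParts g)).part x = P.part x := by
    ext y
    rw [mem_part_ker, P.mem_part_iff_part_eq_part (mem_univ y) (mem_univ x)]
    exact ⟨fun h => congrArg Subtype.val (hg h), fun h => by simp only [liftParts, h]⟩
  ext t
  rw [parts_eq_image_part, parts_eq_image_part]
  simp only [mem_image, mem_univ, true_and, hpart]

noncomputable def kerLift (f : α → β) : (ker f).parts → β :=
  fun t => f (nonempty_of_mem_parts _ t.2).choose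

theorem kerLift_apply_of_mem (f : α → β) {t : Finset α} (ht : t ∈ (ker f).parts) {x : α}
    (hx : x ∈ t) : kerLift f ⟨t, ht⟩ = f x :=
  apply_eq_of_mem_ker_parts ht hx ((ker f).nonempty_of_mem_parts ht).choose_spec

theorem liftParts_kerLift (f : α → β) : (ker f).liftParts (kerLift f) = f :=
  funext fun x => kerLift_apply_of_mem f _ ((ker f).mem_part (mem_univ x))

theorem bijective_kerLift {f : α → β} (hf : Surjective f) : Bijective (kerLift f) := by
  refine ⟨fun ⟨t, ht⟩ ⟨s, hs⟩ hts => ?_, fun b => ?_⟩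
  · obtain ⟨x, hx⟩ := (ker f).nonempty_of_mem_parts ht
    obtain ⟨y, hy⟩ := (ker f).nonempty_of_mem_parts hs
    rw [kerLift_apply_of_mem f ht hx, kerLift_apply_of_mem f hs hy] at hts
    rw [Subtype.mk.injEq, ← (ker f).part_eq_of_mem ht hx, ← (ker f).part_eq_of_mem hs hy]
    exact ((ker f).mem_part_iff_part_eq_part (mem_univ x) (mem_univ y)).1 (mem_part_ker.2 hts)
  · obtain ⟨x, rfl⟩ := hf b
    exact ⟨_, kerLift_apply_of_mem f ((ker f).part_mem.2 (mem_univ x))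
      ((ker f).mem_part (mem_univ x))⟩

end Finpartition

open Finpartition

theorem card_surjective_eq_card_finpartition_mul_factorial {α β : Type*} [Fintype α]
    [DecidableEq α] [Fintype β] [DecidableEq β] :
    Nat.card {f : α → β // Surjective f} =
      Nat.card {P : Finpartition (univ : Finset α) // #P.parts = Fintype.card β} *
        (Fintype.card β)! := by
  let Φ : (Σ P : {P : Finpartition (univ : Finset α) // #P.parts = Fintype.card β},
      P.1.parts ≃ β) → {f : α → β // Surjective f} :=
    fun ⟨P, e⟩ => ⟨P.1.liftParts e, surjective_liftParts e.surjective⟩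
  have hΦ : Bijective Φ := by
    refine ⟨fun ⟨⟨P, hP⟩, e⟩ ⟨⟨Q, hQ⟩, e'⟩ h => ?_, fun ⟨f, hf⟩ => ?_⟩
    · have h : P.liftParts e = Q.liftParts e' := congrArg Subtype.val h
      obtain rfl : P = Q := calc
        P = ker (P.liftParts e) := (ker_liftParts e.injective).symm
        _ = ker (Q.liftParts e') := by rw [h]
        _ = Q := ker_liftParts e'.injective
      obtain rfl : e = e' := Equiv.coe_fn_injective (P.liftParts_injective h)
      rfl
    · have hker := bijective_kerLift hf
      refine ⟨⟨⟨ker f, ?_⟩, Equiv.ofBijective _ hker⟩, Subtype.ext (liftParts_kerLift f)⟩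
      rw [← Fintype.card_of_bijective hker, Fintype.card_coe]
  have hfiber (P : {P : Finpartition (univ : Finset α) // #P.parts = Fintype.card β}) :
      Nat.card (P.1.parts ≃ β) = (Fintype.card β)! := by
    have hcard : Fintype.card P.1.parts = Fintype.card β := by rw [Fintype.card_coe, P.2]
    rw [Nat.card_eq_fintype_card, Fintype.card_equiv (Fintype.equivOfCardEq hcard), hcard]
  rw [← Nat.card_eq_of_bijective Φ hΦ, Nat.card_sigma, Finset.sum_congr rfl fun P _ => hfiber P,
    Finset.sum_const, smul_eq_mul, Finset.card_univ, Nat.card_eq_fintype_card]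

theorem stirling2_mul_factorial (n k : ℕ) :
    stirling2 n k * k ! = Nat.card {f : Fin n → Fin k // Surjective f} := by
  simpa [stirling2] using
    (card_surjective_eq_card_finpartition_mul_factorial (α := Fin n) (β := Fin k)).symm

theorem stirling2_eq_zero_of_lt {n k : ℕ} (h : n < k) : stirling2 n k = 0 := by
  rw [stirling2, Nat.card_eq_zero]
  refine Or.inl ⟨fun ⟨P, hP⟩ => ?_⟩
  have := P.card_parts_le_card
  rw [hP, Finset.card_univ, Fintype.card_fin] at this
  omega

theorem card_surjective_eq_alternating_sum {α β : Type*} [Fintype α] [DecidableEq α] [Fintype β]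
    [DecidableEq β] :
    (Nat.card {f : α → β // Surjective f} : ℤ) =
      ∑ m ∈ range (Fintype.card β + 1), (-1) ^ m * (Fintype.card β).choose m *
        ((Fintype.card β - m : ℕ) : ℤ) ^ Fintype.card α := by
  set avoiding : β → Finset (α → β) := fun b => {f | ∀ x, f x ≠ b}
  have hsurj : univ.filter (fun f : α → β => Surjective f) = univ.inf fun b => (avoiding b)ᶜ := by
    ext f
    rw [mem_filter, Finset.mem_inf]
    simp [avoiding, Surjective]
  have hinf (t : Finset β) : t.inf avoiding = Fintype.piFinset fun _ => tᶜ := by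
    ext f
    simp only [avoiding, Finset.mem_inf, mem_filter, mem_univ, true_and, Fintype.mem_piFinset,
      Finset.mem_compl]
    exact ⟨fun h x hx => h _ hx x rfl, fun h b hb x hfx => h x (hfx ▸ hb)⟩
  rw [Nat.card_eq_fintype_card, Fintype.card_subtype, hsurj, inclusion_exclusion_card_inf_compl]
  simp only [hinf, Fintype.card_piFinset, prod_const, card_compl, Finset.card_univ]
  rw [sum_powerset_apply_card
    (fun m => (-1) ^ m * (((Fintype.card β - m) ^ Fintype.card α : ℕ) : ℤ)), Finset.card_univ]
  refine sum_congr rfl fun m _ => ?_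
  push_cast
  ring

theorem coeff_exp_pow (n j : ℕ) : coeff n (exp ℚ ^ j) = (j : ℚ) ^ n / n ! := by
  rw [exp_pow_eq_rescale_exp, coeff_rescale, coeff_exp, Algebra.algebraMap_self,
    RingHom.id_apply, mul_one_div]

theorem coeff_exp_sub_one_pow_eq_sum (n k : ℕ) :
    coeff n ((exp ℚ - 1) ^ k) =
      (∑ m ∈ range (k + 1), (-1) ^ m * k.choose m * ((k - m : ℕ) : ℚ) ^ n) / n ! := by
  rw [sub_eq_neg_add, add_pow, map_sum, sum_div]
  refine sum_congr rfl fun m _ => ?_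
  rw [show ((-1 : ℚ⟦X⟧) ^ m * exp ℚ ^ (k - m) * (k.choose m : ℚ⟦X⟧))
      = C ((-1 : ℚ) ^ m * k.choose m) * exp ℚ ^ (k - m) by
        simp only [map_mul, map_pow, map_neg, map_one, map_natCast]; ring,
    coeff_C_mul, coeff_exp_pow, mul_div_assoc]

theorem X_pow_dvd_exp_sub_one_pow (k : ℕ) : (X : ℚ⟦X⟧) ^ k ∣ (exp ℚ - 1) ^ k :=
  pow_dvd_pow_of_dvd (X_dvd_iff.2 (by simp [constantCoeff_exp])) k

theorem coeff_exp_sub_one_pow (n k : ℕ) :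
    coeff n ((exp ℚ - 1) ^ k) = (k ! * stirling2 n k : ℚ) / n ! := by
  have hsurj := card_surjective_eq_alternating_sum (α := Fin n) (β := Fin k)
  rw [Fintype.card_fin, Fintype.card_fin, ← stirling2_mul_factorial] at hsurj
  rw [coeff_exp_sub_one_pow_eq_sum, mul_comm]
  congr 1
  exact_mod_cast hsurj.symm

theorem PowerSeries.eq_of_forall_X_pow_dvd_sub {R : Type*} [CommRing R] {f g : R⟦X⟧}
    (h : ∀ n, X ^ (n + 1) ∣ f - g) : f = g := by
  ext n
  rw [← sub_eq_zero, ← map_sub]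
  exact X_pow_dvd_iff.1 (h n) n n.lt_succ_self

section SumSuccMulPow

variable {R : Type*} [CommRing R]

/-- The partial sums of `F(y) = ∑_{i≥1} (i+1)yⁱ = (1 - y)⁻² - 1`. -/
def sumSuccMulPow (y : R) (N : ℕ) : R :=
  ∑ i ∈ Icc 1 N, ((i : R) + 1) * y ^ i

theorem sumSuccMulPow_mul_sub_one_sq (y : R) (N : ℕ) :
    sumSuccMulPow y N * (y - 1) ^ 2 =
      2 * y - y ^ 2 - ((N : R) + 2) * y ^ (N + 1) + ((N : R) + 1) * y ^ (N + 2) := by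
  induction N with
  | zero => simp [sumSuccMulPow]
  | succ N ih =>
    rw [sumSuccMulPow, sum_Icc_succ_top (by omega), add_mul, ← sumSuccMulPow, ih]
    push_cast
    ring

theorem pow_succ_dvd_sumSuccMulPow_mul_sub (y : R) (N : ℕ) :
    y ^ (N + 1) ∣ sumSuccMulPow y N * (y - 1) ^ 2 - (2 * y - y ^ 2) := by
  rw [sumSuccMulPow_mul_sub_one_sq]
  exact ⟨((N : R) + 1) * y - ((N : R) + 2), by ring⟩

end SumSuccMulPow

noncomputable def totalRankEGF : ℚ⟦X⟧ :=
  PowerSeries.mk fun n =>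
    (∑ i ∈ Finset.Icc 1 n, (((i + 1)! : ℚ) / 2) * (stirling2 n i : ℚ)) / (n ! : ℚ)

theorem coeff_sumSuccMulPow_exp_sub_one (m N : ℕ) :
    coeff m (sumSuccMulPow (exp ℚ - 1) N) =
      (∑ i ∈ Icc 1 N, ((i + 1)! : ℚ) * stirling2 m i) / m ! := by
  rw [sumSuccMulPow, map_sum, sum_div]
  refine sum_congr rfl fun i _ => ?_
  rw [show ((i : ℚ⟦X⟧) + 1) = C ((i : ℚ) + 1) by simp, coeff_C_mul, coeff_exp_sub_one_pow,
    factorial_succ]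
  push_cast
  ring

theorem X_pow_succ_dvd_totalRankEGF_sub (N : ℕ) :
    (X : ℚ⟦X⟧) ^ (N + 1) ∣ totalRankEGF - C (1 / 2 : ℚ) * sumSuccMulPow (exp ℚ - 1) N := by
  refine X_pow_dvd_iff.2 fun m hm => ?_
  have hvanish : ∀ i ∈ Icc 1 N, i ∉ Icc 1 m → ((i + 1)! / 2 : ℚ) * stirling2 m i = 0 := by
    intro i hiN hi
    rw [mem_Icc] at hiN hi
    rw [stirling2_eq_zero_of_lt (by omega), Nat.cast_zero, mul_zero]
  rw [map_sub, totalRankEGF, coeff_mk, coeff_C_mul, coeff_sumSuccMulPow_exp_sub_one,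
    sum_subset (Icc_subset_Icc_right (by omega)) hvanish, sub_eq_zero, mul_div_assoc', mul_sum]
  congr 1
  refine sum_congr rfl fun i _ => ?_
  ring

theorem totalRankEGF_mul_sq :
    totalRankEGF * (exp ℚ - 2) ^ 2 = C (1 / 2 : ℚ) * (2 * (exp ℚ - 1) - (exp ℚ - 1) ^ 2) := by
  have hu : exp ℚ - 2 = (exp ℚ - 1) - 1 := by ring
  refine eq_of_forall_X_pow_dvd_sub fun N => ?_
  have hrem : (X : ℚ⟦X⟧) ^ (N + 1) ∣
      sumSuccMulPow (exp ℚ - 1) N * (exp ℚ - 2) ^ 2 - (2 * (exp ℚ - 1) - (exp ℚ - 1) ^ 2) :=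
    hu ▸ (X_pow_dvd_exp_sub_one_pow _).trans (pow_succ_dvd_sumSuccMulPow_mul_sub _ N)
  have hsplit : totalRankEGF * (exp ℚ - 2) ^ 2 - C (1 / 2 : ℚ) * (2 * (exp ℚ - 1) - (exp ℚ - 1) ^ 2)
      = (totalRankEGF - C (1 / 2 : ℚ) * sumSuccMulPow (exp ℚ - 1) N) * (exp ℚ - 2) ^ 2
        + C (1 / 2 : ℚ) * (sumSuccMulPow (exp ℚ - 1) N * (exp ℚ - 2) ^ 2
          - (2 * (exp ℚ - 1) - (exp ℚ - 1) ^ 2)) := by ring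
  rw [hsplit]
  exact dvd_add (dvd_mul_of_dvd_left (X_pow_succ_dvd_totalRankEGF_sub N) _)
    (dvd_mul_of_dvd_right hrem _)

/-- **E.g.f. of the total-rank numbers.** As formal power series over `ℚ`,
`∑_{n≥0} (xⁿ/n!)·∑_{i=1}^{n} ((i+1)!/2)·S(n,i) = −(1/2)·(eˣ−1)(eˣ−3)·(eˣ−2)^{−2}`. -/
theorem egf_total_rank :
    (PowerSeries.mk fun n =>
        (∑ i ∈ Finset.Icc 1 n, (((i + 1)! : ℚ) / 2) * (stirling2 n i : ℚ)) / (n ! : ℚ)) =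
      -(PowerSeries.C (R := ℚ) (1 / 2)) * (PowerSeries.exp ℚ - 1) * (PowerSeries.exp ℚ - 3) *
        ((PowerSeries.exp ℚ - 2)⁻¹) ^ 2 := by
  have hunit : constantCoeff ((exp ℚ - 2) ^ 2) ≠ 0 := by
    rw [map_pow, map_sub, constantCoeff_exp, map_ofNat]
    norm_num
  rw [sq (exp ℚ - 2)⁻¹, ← PowerSeries.mul_inv_rev, ← sq, eq_mul_inv_iff_mul_eq hunit]
  change totalRankEGF * _ = _
  rw [totalRankEGF_mul_sq]
  ring
end

section
/- Fix n ≥ 1 and 1 ≤ r ≤ n. The sum, over all compositions c = (c_1,…,c_k) of n, of the r-th part c_r (taken to be 0 when k < r) equals ∑_{i=r}^{n} C(n,i), where C(n,i) is the binomial coefficient. Equivalently, the probability that a uniformly random one of the n elements of a uniformly random composition of n has rank r is (1/(n·2^{n−1})) ∑_{i=r}^{n} C(n,i). -/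
/-!
Every composition of `n + 2` arises in exactly one way from a composition of `n + 1`, either by
enlarging its first part or by prepending a part `1`. The first operation keeps all ranks and adds
`1` to the part of rank `1`; the second shifts every rank up by one. Hence the total `S(n, r)` of
the parts of rank `r` satisfies `S(n + 1, r) = S(n, r) + S(n, r - 1)` for `r ≥ 2` and
`S(n + 1, 1) = S(n, 1) + 2 ^ n`. By Pascal's rule the tail sums `∑_{i ≥ r} C(n, i)` obey the same
recursion, the second case because `∑_{i ≥ 0} C(n, i) = 2 ^ n`.
-/

open Finset Nat

namespace Composition

variable {n : ℕ}

def consOne (c : Composition n) : Composition (n + 1) where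
  blocks := 1 :: c.blocks
  blocks_pos := by
    rintro i (_ | ⟨_, hi⟩)
    exacts [Nat.one_pos, c.blocks_pos hi]
  blocks_sum := by simp [c.blocks_sum, Nat.add_comm]

lemma exists_blocks_eq_cons (c : Composition (n + 1)) : ∃ a l, c.blocks = a :: l :=
  List.exists_cons_of_ne_nil (by simp [blocks_eq_nil])

def succHead (c : Composition (n + 1)) : Composition (n + 2) where
  blocks := c.blocks.modifyHead (· + 1)
  blocks_pos := by
    obtain ⟨a, l, hc⟩ := c.exists_blocks_eq_cons
    rintro i hi
    rw [hc, List.modifyHead_cons, List.mem_cons] at hi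
    rcases hi with rfl | hi
    · exact Nat.succ_pos a
    · exact c.blocks_pos (hc ▸ List.mem_cons_of_mem a hi)
  blocks_sum := by
    obtain ⟨a, l, hc⟩ := c.exists_blocks_eq_cons
    have := c.blocks_sum
    rw [hc, List.sum_cons] at this
    simp only [hc, List.modifyHead_cons, List.sum_cons]
    omega

@[simp] lemma consOne_blocks (c : Composition n) : c.consOne.blocks = 1 :: c.blocks := rfl

@[simp] lemma succHead_blocks (c : Composition (n + 1)) :
    c.succHead.blocks = c.blocks.modifyHead (· + 1) := rfl

lemma succHead_injective : Function.Injective (succHead (n := n)) := by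
  intro c d h
  obtain ⟨a, l, hc⟩ := c.exists_blocks_eq_cons
  obtain ⟨b, m, hd⟩ := d.exists_blocks_eq_cons
  have := congrArg blocks h
  simp only [succHead_blocks, hc, hd, List.modifyHead_cons, List.cons.injEq] at this
  ext1
  rw [hc, hd, Nat.succ_injective this.1, this.2]

lemma consOne_injective : Function.Injective (consOne (n := n)) := fun _ _ h =>
  Composition.ext (List.cons_injective (congrArg blocks h))

lemma succHead_ne_consOne (c d : Composition (n + 1)) : c.succHead ≠ d.consOne := by
  intro h
  obtain ⟨a, l, hc⟩ := c.exists_blocks_eq_cons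
  have ha := c.one_le_blocks (i := a) (by simp [hc])
  have := congrArg blocks h
  simp only [succHead_blocks, consOne_blocks, hc, List.modifyHead_cons, List.cons.injEq] at this
  omega

lemma bijective_sumElim_succHead_consOne :
    Function.Bijective (Sum.elim (succHead (n := n)) consOne) := by
  refine ⟨succHead_injective.sumElim consOne_injective succHead_ne_consOne, fun c => ?_⟩
  obtain ⟨a, l, hc⟩ := c.exists_blocks_eq_cons
  have hpos : ∀ i ∈ a :: l, 0 < i := fun i hi => c.blocks_pos (hc ▸ hi)
  have hsum : a + l.sum = n + 2 := by simpa [hc] using c.blocks_sum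
  have ha : 0 < a := hpos a List.mem_cons_self
  have hl : ∀ i ∈ l, 0 < i := fun i hi => hpos i (List.mem_cons_of_mem a hi)
  rcases (Nat.one_le_iff_ne_zero.2 ha.ne').eq_or_lt with rfl | ha
  · refine ⟨.inr ⟨l, fun hi => hl _ hi, by omega⟩, Composition.ext ?_⟩
    simp [hc]
  · refine ⟨.inl ⟨(a - 1) :: l, ?_, by simp; omega⟩, Composition.ext ?_⟩
    · rintro i (_ | ⟨_, hi⟩)
      exacts [by omega, hl i hi]
    · simp [hc]; omega

lemma sum_univ_succ_succ {M : Type*} [AddCommMonoid M] (f : Composition (n + 2) → M) :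
    ∑ c, f c = ∑ c : Composition (n + 1), f c.succHead + ∑ c : Composition (n + 1), f c.consOne := by
  rw [← Fintype.sum_bijective _ bijective_sumElim_succHead_consOne _ f (fun _ => rfl),
    Fintype.sum_sum_type]
  rfl

lemma getD_succHead_blocks (c : Composition (n + 1)) (k : ℕ) :
    c.succHead.blocks.getD k 0 = c.blocks.getD k 0 + if k = 0 then 1 else 0 := by
  obtain ⟨a, l, hc⟩ := c.exists_blocks_eq_cons
  cases k <;> simp [hc]

lemma blocks_eq_singleton_one (c : Composition 1) : c.blocks = [1] := by
  rw [eq_ones_iff_le_length.2 (c.length_pos_iff.2 Nat.one_pos)]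
  rfl

end Composition

open Composition

-- `k` is a list index, so this sums the parts of rank `k + 1`.
def rankSum (n k : ℕ) : ℕ := ∑ c : Composition n, c.blocks.getD k 0

lemma rankSum_zero_left (k : ℕ) : rankSum 0 k = 0 := by
  simp [rankSum, (blocks_eq_nil _).2 rfl]

lemma rankSum_one_left (k : ℕ) : rankSum 1 k = if k = 0 then 1 else 0 := by
  cases k <;> simp [rankSum, blocks_eq_singleton_one, composition_card]

lemma rankSum_succ_succ_zero (n : ℕ) : rankSum (n + 2) 0 = rankSum (n + 1) 0 + 2 ^ (n + 1) := by
  simp only [rankSum, sum_univ_succ_succ, getD_succHead_blocks, consOne_blocks,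
    List.getD_cons_zero, if_true, sum_add_distrib, sum_const, Finset.card_univ, composition_card,
    Nat.add_sub_cancel, smul_eq_mul]
  ring

lemma rankSum_succ_succ_succ (n k : ℕ) :
    rankSum (n + 2) (k + 1) = rankSum (n + 1) (k + 1) + rankSum (n + 1) k := by
  simp only [rankSum, sum_univ_succ_succ, getD_succHead_blocks, consOne_blocks,
    List.getD_cons_succ, add_eq_zero, one_ne_zero, and_false, if_false, add_zero]

lemma sum_Icc_choose_succ_succ (m r : ℕ) :
    ∑ i ∈ Icc (r + 1) (m + 1), (m + 1).choose i
      = ∑ i ∈ Icc (r + 1) m, m.choose i + ∑ i ∈ Icc r m, m.choose i := by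
  have shift (f : ℕ → ℕ) : ∑ i ∈ Icc (r + 1) (m + 1), f i = ∑ i ∈ Icc r m, f (i + 1) := by
    rw [← map_add_right_Icc, sum_map]
    rfl
  have drop_top : ∑ i ∈ Icc (r + 1) m, m.choose i = ∑ i ∈ Icc (r + 1) (m + 1), m.choose i :=
    sum_subset (Icc_subset_Icc_right m.le_succ) fun i hi hi' =>
      choose_eq_zero_of_lt (by simp only [Finset.mem_Icc] at hi hi'; omega)
  rw [shift, drop_top, shift, ← sum_add_distrib]
  exact sum_congr rfl fun i _ => by rw [choose_succ_succ', add_comm]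

theorem rankSum_eq_sum_choose : ∀ n k : ℕ, rankSum n k = ∑ i ∈ Icc (k + 1) n, n.choose i
  | 0, k => by simp [rankSum_zero_left]
  | 1, k => by cases k <;> simp [rankSum_one_left]
  | n + 2, 0 => by
    rw [rankSum_succ_succ_zero, rankSum_eq_sum_choose (n + 1) 0, sum_Icc_choose_succ_succ (n + 1) 0,
      ← range_succ_eq_Icc_zero, sum_range_choose]
  | n + 2, k + 1 => by
    rw [rankSum_succ_succ_succ, rankSum_eq_sum_choose, rankSum_eq_sum_choose,
      sum_Icc_choose_succ_succ (n + 1) (k + 1)]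

theorem rank_count_unlabeled_general (n r : ℕ) (hr : 1 ≤ r) :
    ∑ c : Composition n, c.blocks.getD (r - 1) 0 = ∑ i ∈ Finset.Icc r n, n.choose i := by
  obtain ⟨k, rfl⟩ := Nat.exists_eq_add_of_le' hr
  exact rankSum_eq_sum_choose n k

/-- **Rank distribution in a random composition (unlabeled case).** For `1 ≤ r ≤ n`, the sum
over all compositions `c = (c_1,…,c_k)` of `n` of the `r`-th part `c_r` (taken to be `0` when
`k < r`; parts are indexed from `1`, so `c_r` is entry `r−1` of the list of blocks) equals
`∑_{i=r}^{n} C(n,i)`.  Equivalently, the probability that a uniformly random one of the `n`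
elements of a uniformly random composition of `n` has rank `r` is
`(1/(n·2^{n−1}))·∑_{i=r}^{n} C(n,i)`. -/
theorem rank_count_unlabeled (n r : ℕ) (hr : 1 ≤ r) (hrn : r ≤ n) :
    ∑ c : Composition n, c.blocks.getD (r - 1) 0 = ∑ i ∈ Finset.Icc r n, n.choose i :=
  rank_count_unlabeled_general n r hr
end
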